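/- arXiv:1907.13301 — 5 statements merged into one kernel-verified Lean document; each statement's English description precedes it below -/
import Mathlib

section
/- Let G be a stochastic diffusion model on a finite node set V with |V| = n ≥ 2 that satisfies the variance bound with constant c ≥ 1 for step limit τ. Fix an integer s ≥ 1 and reals 0 < ε < 1 and 0 < δ < 1. Construct the median-of-averages oracle m from r·ℓ i.i.d. simulations arranged in r pools of ℓ simulations each, with r ≥ 28·ln(n^s/δ) and ℓ ≥ 4·c·ε^{-2}. Then any set T with |T| ≤ s that maximizes m(S) over all S ⊆ V with |S| ≤ s satisfies Pr[ I^τ(T) ≥ (1 − 2ε)·OPT^τ_s ] ≥ 1 − δ. (In particular, 112·ε^{-2}·c·s·ln(n/δ) i.i.d. simulations suffice, up to integer rounding, to recover a (1−2ε)-approximate influence maximizer with confidence 1−δ.) -/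
open Finset

/-- A family of activation functions: for each node `v`, a monotone boolean
function of the current active set. -/
abbrev ActFam (V : Type*) := V → Finset V → Bool

section Core
variable {V : Type*} [Fintype V] [DecidableEq V]

/-- One diffusion step: all active nodes stay active, and an inactive node `v`
becomes active when `φ v` evaluates to `true` on the active set (minus `v`). -/
def dstep (φ : ActFam V) (A : Finset V) : Finset V :=
  A ∪ Finset.univ.filter (fun v => φ v (A.erase v) = true)

/-- `reach φ S t` : the set `ρ^t(φ,S)` of nodes active after `t` diffusion steps
from seed set `S`. -/
def reach (φ : ActFam V) (S : Finset V) : ℕ → Finset V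
  | 0 => S
  | t + 1 => dstep φ (reach φ S t)

/-- τ-step influence `I^τ(S)` of a seed set `S`, under the distribution `p` over
activation-function families and utility `H`. -/
noncomputable def infl (p : ActFam V → ℝ) (H : Finset V → ℝ) (τ : ℕ) (S : Finset V) : ℝ :=
  ∑ φ : ActFam V, p φ * H (reach φ S τ)

/-- Variance of the τ-step reachability value `R^τ(S) = H(ρ^τ(φ,S))`. -/
noncomputable def varReach (p : ActFam V → ℝ) (H : Finset V → ℝ) (τ : ℕ) (S : Finset V) : ℝ :=
  ∑ φ : ActFam V, p φ * (H (reach φ S τ) - infl p H τ S) ^ 2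

/-- Submodularity of a set function. -/
def SubmodularFn (F : Finset V → ℝ) : Prop :=
  ∀ A B : Finset V, A ⊆ B → ∀ x ∉ B, F (insert x B) - F B ≤ F (insert x A) - F A

/-- Monotone nondecreasing set function. -/
def MonotoneFn (F : Finset V → ℝ) : Prop :=
  ∀ A B : Finset V, A ⊆ B → F A ≤ F B

/-- A stochastic diffusion model: a probability distribution over families of
monotone activation functions. -/
structure SDM (V : Type*) [Fintype V] [DecidableEq V] where
  p : ActFam V → ℝ
  nonneg : ∀ φ, 0 ≤ p φ
  sum_one : ∑ φ : ActFam V, p φ = 1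
  mono : ∀ φ, p φ ≠ 0 → ∀ v, Monotone (φ v)

/-- The SDM given by weights `p` is independent: the activation functions of the
nodes are mutually independent, i.e. `p` is a product of per-node distributions. -/
def IndepP (p : ActFam V → ℝ) : Prop :=
  ∃ q : V → (Finset V → Bool) → ℝ,
    (∀ v g, 0 ≤ q v g) ∧ (∀ v, ∑ g : Finset V → Bool, q v g = 1) ∧
    (∀ φ, p φ = ∏ v, q v (φ v))

/-- Influence function of the reduced model with respect to `T`:  the expectation,
conditioned on no node outside `T` being directly activated by `T`, of the marginal
utility `H(ρ^τ(φ, S ∪ T)) - H(T)`.  (For an independent SDM this coincides with the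
influence of the reduced model on node set `V ∖ T` with utility `H'(S) = H(S∪T) - H(T)`.) -/
noncomputable def reducedInfl (p : ActFam V → ℝ) (H : Finset V → ℝ) (T : Finset V)
    (τ : ℕ) (S : Finset V) : ℝ :=
  (∑ φ : ActFam V,
      Set.indicator {ψ : ActFam V | ∀ v ∉ T, ψ v (T.erase v) = false} p φ *
        (H (reach φ (S ∪ T) τ) - H T)) /
  (∑ φ : ActFam V, Set.indicator {ψ : ActFam V | ∀ v ∉ T, ψ v (T.erase v) = false} p φ)

/-- Submodularity of a set function restricted to subsets of a ground set `U`. -/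
def SubmodularOn (U : Finset V) (F : Finset V → ℝ) : Prop :=
  ∀ A B : Finset V, A ⊆ B → B ⊆ U → ∀ x ∈ U, x ∉ B →
    F (insert x B) - F B ≤ F (insert x A) - F A

/-- Strong submodularity: the model is independent, the utility is submodular, and
the influence function of every reduced model (w.r.t. any `T` and any step limit)
is submodular on the reduced ground set `V ∖ T`. -/
def StronglySubmodular (p : ActFam V → ℝ) (H : Finset V → ℝ) : Prop :=
  IndepP p ∧ SubmodularFn H ∧
    ∀ (T : Finset V) (τ : ℕ), SubmodularOn Tᶜ (reducedInfl p H T τ)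

/-- `max_{v ∈ V} I^τ({v})`. -/
noncomputable def maxSingle (p : ActFam V → ℝ) (H : Finset V → ℝ) (τ : ℕ) : ℝ :=
  ⨆ v : V, infl p H τ {v}

/-- `OPT^τ_s`, the maximum influence of a seed set of size at most `s`. -/
noncomputable def OPTs (p : ActFam V → ℝ) (H : Finset V → ℝ) (τ : ℕ) (s : ℕ) : ℝ :=
  sSup {x : ℝ | ∃ S : Finset V, S.card ≤ s ∧ x = infl p H τ S}

/-- The variance bound with constant `c`. -/
def VarBoundC (p : ActFam V → ℝ) (H : Finset V → ℝ) (τ : ℕ) (c : ℝ) : Prop :=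
  ∀ T : Finset V,
    varReach p H τ T ≤ c * infl p H τ T * max (infl p H τ T) (maxSingle p H τ)

end Core

/-- Median of `r` reals: the `⌈r/2⌉`-th smallest value. -/
noncomputable def medianR {r : ℕ} (y : Fin r → ℝ) : ℝ :=
  ((List.ofFn y).mergeSort (fun a b => a ≤ b)).getD ((r + 1) / 2 - 1) 0

/-- Probability of the event `P` under (finitely supported) weights `w`. -/
noncomputable def prOf {α : Type*} [Fintype α] (w : α → ℝ) (P : Set α) : ℝ :=
  ∑ a : α, Set.indicator P w a

/-!
For a fixed seed set `S`, each pool average is an unbiased estimate of `I(S)` with variance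
`Var[R(S)] / ℓ`, so by Chebyshev and the variance bound it lies within
`ε · max (I(S), max_v I({v}))` of `I(S)` with probability at least `3 / 4`. The median fails
only if at least half of the `r` independent pools fail, which by a Chernoff bound has
probability at most `(5 / (4√2))^r ≤ δ / (2 nˢ)`. A union bound over the at most `2 nˢ` seed
sets of size at most `s` makes the oracle this accurate on all of them with probability at least
`1 - δ`, and since `max_v I({v}) ≤ OPT`, an oracle that accurate is maximized only by
`(1 - 2ε)`-approximate influence maximizers.
-/

namespace Weights

section
variable {α : Type*}

/-- The law of `k` independent draws from `w`. -/
def piWeight (w : α → ℝ) (k : ℕ) (ω : Fin k → α) : ℝ := ∏ i, w (ω i)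

lemma piWeight_nonneg {w : α → ℝ} (hw0 : ∀ a, 0 ≤ w a) (k : ℕ) (ω : Fin k → α) :
    0 ≤ piWeight w k ω :=
  prod_nonneg fun i _ => hw0 (ω i)

variable [Fintype α]

noncomputable def expectation (w f : α → ℝ) : ℝ := ∑ a, w a * f a

noncomputable def variance (w f : α → ℝ) : ℝ :=
  expectation w fun a => (f a - expectation w f) ^ 2

variable {w : α → ℝ}

lemma expectation_const_one (hw1 : ∑ a, w a = 1) : expectation w (fun _ => 1) = 1 := by
  simp [expectation, hw1]

lemma expectation_sub_expectation (hw1 : ∑ a, w a = 1) (f : α → ℝ) :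
    expectation w (fun a => f a - expectation w f) = 0 := by
  simp only [expectation, mul_sub, sum_sub_distrib, ← sum_mul, hw1, one_mul]
  exact sub_self _

lemma expectation_piWeight_prod_univ (k : ℕ) (h : Fin k → α → ℝ) :
    expectation (piWeight w k) (fun ω => ∏ i, h i (ω i)) = ∏ i, expectation w (h i) := by
  classical
  simp only [expectation, piWeight, ← prod_mul_distrib]
  exact (Fintype.prod_sum fun i a => w a * h i a).symm

lemma expectation_piWeight_prod (hw1 : ∑ a, w a = 1) {k : ℕ} (J : Finset (Fin k))
    (h : Fin k → α → ℝ) :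
    expectation (piWeight w k) (fun ω => ∏ i ∈ J, h i (ω i)) =
      ∏ i ∈ J, expectation w (h i) := by
  classical
  convert expectation_piWeight_prod_univ (w := w) k (fun i a => if i ∈ J then h i a else 1)
    using 1
  · simp only [Fintype.prod_ite_mem]
  · rw [← Fintype.prod_ite_mem]
    congr! 1 with i
    split_ifs <;> simp [expectation_const_one hw1]

lemma sum_piWeight (hw1 : ∑ a, w a = 1) (k : ℕ) : ∑ ω, piWeight w k ω = 1 := by
  simpa [expectation] using expectation_piWeight_prod hw1 (∅ : Finset (Fin k)) fun _ _ => 1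

lemma expectation_const_mul (c : ℝ) (f : α → ℝ) :
    expectation w (fun a => c * f a) = c * expectation w f := by
  simp only [expectation, mul_sum, mul_left_comm]

lemma expectation_sum {ι : Type*} (s : Finset ι) (F : ι → α → ℝ) :
    expectation w (fun a => ∑ i ∈ s, F i a) = ∑ i ∈ s, expectation w (F i) := by
  simp only [expectation, mul_sum]
  exact sum_comm

lemma expectation_piWeight_mul (hw1 : ∑ a, w a = 1) {k : ℕ} (j j' : Fin k) (g : α → ℝ) :
    expectation (piWeight w k) (fun b => g (b j) * g (b j')) =
      if j = j' then expectation w (fun a => g a * g a) else expectation w g * expectation w g := by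
  split_ifs with hjj
  · subst hjj
    simpa using expectation_piWeight_prod hw1 {j} fun _ a => g a * g a
  · simpa [prod_pair hjj] using expectation_piWeight_prod hw1 {j, j'} fun _ => g

lemma expectation_piWeight_mean_sub_sq (hw1 : ∑ a, w a = 1) (f : α → ℝ) {ℓ : ℕ}
    (hℓ : ℓ ≠ 0) :
    expectation (piWeight w ℓ)
        (fun b => ((1 / ℓ : ℝ) * ∑ j, f (b j) - expectation w f) ^ 2) =
      variance w f / ℓ := by
  set μ := expectation w f
  set g : α → ℝ := fun a => f a - μ
  have hdev : ∀ b : Fin ℓ → α,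
      (1 / ℓ : ℝ) * ∑ j, f (b j) - μ = (1 / ℓ : ℝ) * ∑ j, g (b j) := by
    intro b
    simp only [g, sum_sub_distrib, sum_const, card_univ, Fintype.card_fin, nsmul_eq_mul]
    field_simp
  have hcross : ∀ j j' : Fin ℓ, expectation (piWeight w ℓ) (fun b => g (b j) * g (b j')) =
      if j = j' then variance w f else 0 := by
    intro j j'
    rw [expectation_piWeight_mul hw1, expectation_sub_expectation hw1 f, mul_zero]
    simp only [variance, sq]
    rfl
  calc expectation (piWeight w ℓ) (fun b => ((1 / ℓ : ℝ) * ∑ j, f (b j) - μ) ^ 2)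
      = expectation (piWeight w ℓ)
          (fun b => (1 / ℓ : ℝ) ^ 2 * ∑ j, ∑ j', g (b j) * g (b j')) := by
        simp only [hdev, mul_pow, sq (∑ j, g _), sum_mul_sum]
    _ = (1 / ℓ : ℝ) ^ 2 *
          ∑ j : Fin ℓ, ∑ j' : Fin ℓ, if j = j' then variance w f else 0 := by
        simp only [expectation_const_mul, expectation_sum, hcross]
    _ = variance w f / ℓ := by
        simp only [sum_ite_eq, mem_univ, if_true, sum_const, card_univ, Fintype.card_fin,
          nsmul_eq_mul]
        field_simp

lemma prOf_nonneg (hw0 : ∀ a, 0 ≤ w a) (P : Set α) : 0 ≤ prOf w P :=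
  sum_nonneg fun a _ => Set.indicator_nonneg (fun a _ => hw0 a) a

lemma prOf_mono (hw0 : ∀ a, 0 ≤ w a) {P Q : Set α} (hPQ : P ⊆ Q) : prOf w P ≤ prOf w Q :=
  sum_le_sum fun a _ => Set.indicator_le_indicator_of_subset hPQ hw0 a

lemma prOf_compl (hw1 : ∑ a, w a = 1) (P : Set α) : prOf w Pᶜ = 1 - prOf w P := by
  simp only [prOf, Set.indicator_compl, Pi.sub_apply, sum_sub_distrib, hw1]

lemma prOf_biUnion_le (hw0 : ∀ a, 0 ≤ w a) {ι : Type*} (s : Finset ι) (B : ι → Set α) :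
    prOf w (⋃ i ∈ s, B i) ≤ ∑ i ∈ s, prOf w (B i) := by
  have hnonneg : ∀ i x, 0 ≤ Set.indicator (B i) w x := fun i =>
    Set.indicator_nonneg fun x _ => hw0 x
  have hpt : ∀ x,
      Set.indicator (⋃ i ∈ s, B i) w x ≤ ∑ i ∈ s, Set.indicator (B i) w x := by
    intro x
    by_cases hx : x ∈ ⋃ i ∈ s, B i
    · obtain ⟨i, hi, hxi⟩ := Set.mem_iUnion₂.1 hx
      rw [Set.indicator_of_mem hx, ← Set.indicator_of_mem hxi w]
      exact single_le_sum (fun j _ => hnonneg j x) hi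
    · rw [Set.indicator_of_notMem hx]
      exact sum_nonneg fun i _ => hnonneg i x
  calc prOf w (⋃ i ∈ s, B i) ≤ ∑ x, ∑ i ∈ s, Set.indicator (B i) w x :=
        sum_le_sum fun x _ => hpt x
    _ = ∑ i ∈ s, prOf w (B i) := sum_comm

/-- Chebyshev's inequality, in a form that stays valid for `a = 0`. -/
lemma prOf_lt_abs_le (hw0 : ∀ a, 0 ≤ w a) {Z : α → ℝ} {a q : ℝ} (ha : 0 ≤ a)
    (hq : 0 ≤ q)
    (hZ : expectation w (fun x => Z x ^ 2) ≤ q * a ^ 2) : prOf w {x | a < |Z x|} ≤ q := by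
  have hterm : ∀ x, 0 ≤ w x * Z x ^ 2 := fun x => mul_nonneg (hw0 x) (sq_nonneg _)
  rcases ha.eq_or_lt with rfl | ha
  · have hzero : ∀ x, w x * Z x ^ 2 = 0 := by
      have hsum : ∑ x, w x * Z x ^ 2 = 0 :=
        le_antisymm (by simpa [expectation] using hZ) (sum_nonneg fun x _ => hterm x)
      exact fun x => (sum_eq_zero_iff_of_nonneg fun x _ => hterm x).1 hsum x (mem_univ x)
    have hprob : prOf w {x | 0 < |Z x|} = 0 := by
      refine sum_eq_zero fun x _ => Set.indicator_apply_eq_zero.2 fun hx => ?_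
      have hx : Z x ≠ 0 := abs_pos.1 hx
      exact (mul_eq_zero.1 (hzero x)).resolve_right (pow_ne_zero 2 hx)
    exact hprob.le.trans hq
  · have hmarkov : prOf w {x | a < |Z x|} * a ^ 2 ≤ expectation w (fun x => Z x ^ 2) := by
      rw [prOf, sum_mul]
      refine sum_le_sum fun x _ => ?_
      by_cases hx : a < |Z x|
      · rw [Set.indicator_of_mem (s := {x | a < |Z x|}) hx]
        show w x * a ^ 2 ≤ w x * Z x ^ 2
        rw [← sq_abs (Z x)]
        exact mul_le_mul_of_nonneg_left (pow_le_pow_left₀ ha.le hx.le 2) (hw0 x)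
      · rw [Set.indicator_of_notMem (s := {x | a < |Z x|}) hx, zero_mul]
        exact hterm x
    exact le_of_mul_le_mul_right (hmarkov.trans hZ) (by positivity)

/-- A Chernoff bound: Markov's inequality for `2 ^ #{i | P (ω i)}`, whose expectation is
`(1 + Pr P) ^ r`. -/
lemma prOf_half_le (hw0 : ∀ a, 0 ≤ w a) (hw1 : ∑ a, w a = 1) (P : α → Prop)
    [DecidablePred P] (r : ℕ) :
    prOf (piWeight w r) {ω | r ≤ 2 * #{i | P (ω i)}} ≤
      ((1 + prOf w {a | P a}) / √2) ^ r := by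
  set t : α → ℝ := fun a => if P a then 2 else 1
  have hprod : ∀ ω : Fin r → α, ∏ i, t (ω i) = 2 ^ #{i | P (ω i)} := by
    intro ω
    simp [t, prod_ite]
  have hpt : ∀ ω,
      Set.indicator {ω : Fin r → α | r ≤ 2 * #{i | P (ω i)}} (piWeight w r) ω ≤
        piWeight w r ω * (∏ i, t (ω i)) / √2 ^ r := by
    intro ω
    have hω0 := piWeight_nonneg hw0 r ω
    by_cases hω : r ≤ 2 * #{i | P (ω i)}
    · rw [Set.indicator_of_mem (s := {ω : Fin r → α | r ≤ 2 * #{i | P (ω i)}}) hω,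
        le_div_iff₀ (by positivity), hprod]
      refine mul_le_mul_of_nonneg_left ?_ hω0
      calc √2 ^ r ≤ √2 ^ (2 * #{i | P (ω i)}) :=
            pow_le_pow_right₀ (Real.one_le_sqrt.2 one_le_two) hω
        _ = 2 ^ #{i | P (ω i)} := by rw [pow_mul, Real.sq_sqrt zero_le_two]
    · rw [Set.indicator_of_notMem (s := {ω : Fin r → α | r ≤ 2 * #{i | P (ω i)}}) hω]
      positivity
  have ht : expectation w t = 1 + prOf w {a | P a} := by
    simp only [expectation, prOf, ← hw1, ← sum_add_distrib]
    refine sum_congr rfl fun a _ => ?_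
    simp only [t, Set.indicator_apply, Set.mem_ofPred_eq]
    split_ifs <;> ring
  calc prOf (piWeight w r) {ω | r ≤ 2 * #{i | P (ω i)}}
      ≤ ∑ ω, piWeight w r ω * (∏ i, t (ω i)) / √2 ^ r := sum_le_sum fun ω _ => hpt ω
    _ = expectation w t ^ r / √2 ^ r := by
        rw [← sum_div]
        exact congrArg (· / _) ((expectation_piWeight_prod_univ r fun _ => t).trans (by simp))
    _ = ((1 + prOf w {a | P a}) / √2) ^ r := by rw [ht, div_pow]

end

end Weights

namespace List

variable {α : Type*} [LinearOrder α] {L : List α}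

lemma SortedLE.succ_le_countP_lt (hL : L.SortedLE) {k : ℕ} (hk : k < L.length) {b : α}
    (hb : L[k] < b) : k + 1 ≤ L.countP (fun x => decide (x < b)) := by
  have hall : ∀ x ∈ L.take (k + 1), decide (x < b) = true := by
    intro x hx
    obtain ⟨i, hi, rfl⟩ := mem_take_iff_getElem.1 hx
    have hik : (⟨i, by omega⟩ : Fin L.length) ≤ ⟨k, hk⟩ := Fin.mk_le_mk.2 (by omega)
    exact decide_eq_true ((hL.monotone_get hik).trans_lt hb)
  calc k + 1 = (L.take (k + 1)).length := by rw [length_take]; omega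
    _ = (L.take (k + 1)).countP (fun x => decide (x < b)) := (countP_eq_length.2 hall).symm
    _ ≤ L.countP (fun x => decide (x < b)) := (take_sublist _ _).countP_le

lemma SortedLE.length_sub_le_countP_gt (hL : L.SortedLE) {k : ℕ} (hk : k < L.length) {b : α}
    (hb : b < L[k]) : L.length - k ≤ L.countP (fun x => decide (b < x)) := by
  have hall : ∀ x ∈ L.drop k, decide (b < x) = true := by
    intro x hx
    obtain ⟨i, hi, rfl⟩ := mem_drop_iff_getElem.1 hx
    have hki : (⟨k, hk⟩ : Fin L.length) ≤ ⟨k + i, by omega⟩ := Fin.mk_le_mk.2 (by omega)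
    exact decide_eq_true (hb.trans_le (hL.monotone_get hki))
  calc L.length - k = (L.drop k).length := (length_drop ..).symm
    _ = (L.drop k).countP (fun x => decide (b < x)) := (countP_eq_length.2 hall).symm
    _ ≤ L.countP (fun x => decide (b < x)) := (drop_sublist _ _).countP_le

end List

lemma abs_medianR_sub_le {r : ℕ} (y : Fin r → ℝ) {μ a : ℝ}
    (hmaj : r < 2 * #{i | |y i - μ| ≤ a}) : |medianR y - μ| ≤ a := by
  set L := (List.ofFn y).mergeSort (fun a b => a ≤ b)
  have hsorted : L.SortedLE := List.sortedLE_mergeSort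
  have hlen : L.length = r := by rw [(List.mergeSort_perm _ _).length_eq, List.length_ofFn]
  have hcount : ∀ (P : ℝ → Prop) [DecidablePred P],
      L.countP (fun x => decide (P x)) = #{i | P (y i)} := by
    intro P _
    rw [(List.mergeSort_perm _ _).countP_eq, ← Multiset.coe_countP, ← Fin.univ_val_map,
      Multiset.countP_map]
    rfl
  have hfar : ∀ (P : ℝ → Prop) [DecidablePred P], (∀ x, P x → a < |x - μ|) →
      2 * L.countP (fun x => decide (P x)) < r := by
    intro P _ hP
    have hle : L.countP (fun x => decide (P x)) ≤ L.countP (fun x => !decide (|x - μ| ≤ a)) :=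
      List.countP_mono_left fun x _ hx => by simpa using hP x (by simpa using hx)
    have hsplit := List.length_eq_countP_add_countP (fun x => decide (|x - μ| ≤ a)) (l := L)
    rw [hcount (fun x => |x - μ| ≤ a)] at hsplit
    simp only [decide_not, Bool.decide_eq_true] at hsplit
    omega
  have hr : 0 < r := by
    have := card_le_univ (univ.filter fun i => |y i - μ| ≤ a)
    simp only [Fintype.card_fin] at this
    omega
  have hk : (r + 1) / 2 - 1 < L.length := by omega
  have hmed : medianR y = L[(r + 1) / 2 - 1] := List.getD_eq_getElem _ _ hk
  rw [hmed, abs_le]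
  constructor
  · by_contra! hlow
    have h1 := hsorted.succ_le_countP_lt hk (b := μ - a) (by linarith)
    have h2 := hfar (· < μ - a) fun x hx => by
      rw [abs_sub_comm]
      exact lt_abs.2 (Or.inl (by linarith))
    omega
  · by_contra! hhigh
    have h1 := hsorted.length_sub_le_countP_gt hk (b := μ + a) (by linarith)
    have h2 := hfar (μ + a < ·) fun x hx => lt_abs.2 (Or.inl (by linarith))
    omega

namespace Weights

variable {α : Type*} [Fintype α] {w : α → ℝ}

/-- Each pool mean is `a`-accurate with probability at least `3 / 4` by Chebyshev, and the
median is `a`-accurate unless at least half of the pools fail. -/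
theorem prOf_lt_abs_medianR_sub_le (hw0 : ∀ a, 0 ≤ w a) (hw1 : ∑ a, w a = 1) (f : α → ℝ)
    {ℓ : ℕ} (hℓ : ℓ ≠ 0) (r : ℕ) {a : ℝ} (ha : 0 ≤ a)
    (hvar : 4 * variance w f ≤ ℓ * a ^ 2) :
    prOf (piWeight (piWeight w ℓ) r)
        {ω | a < |medianR (fun i => 1 / (ℓ : ℝ) * ∑ j, f (ω i j)) - expectation w f|} ≤
      (5 / (4 * √2)) ^ r := by
  classical
  set μ := expectation w f
  set Far : Set (Fin ℓ → α) := {b | a < |1 / (ℓ : ℝ) * ∑ j, f (b j) - μ|}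
  have hpool : prOf (piWeight w ℓ) Far ≤ 1 / 4 := by
    refine prOf_lt_abs_le (piWeight_nonneg hw0 ℓ) ha (by norm_num) ?_
    rw [expectation_piWeight_mean_sub_sq hw1 f hℓ, div_le_iff₀ (by positivity)]
    linarith
  have hsub : {ω : Fin r → Fin ℓ → α |
      a < |medianR (fun i => 1 / (ℓ : ℝ) * ∑ j, f (ω i j)) - μ|} ⊆
        {ω | r ≤ 2 * #{i | ω i ∈ Far}} := by
    intro ω hω
    by_contra! hfew
    have hsplit := card_filter_add_card_filter_not (s := univ) (fun i => ω i ∈ Far)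
    simp only [card_univ, Fintype.card_fin, Far, Set.mem_ofPred_eq, not_lt] at hsplit hfew
    exact (abs_medianR_sub_le _ (by omega)).not_gt hω
  calc _ ≤ prOf (piWeight (piWeight w ℓ) r) {ω | r ≤ 2 * #{i | ω i ∈ Far}} :=
        prOf_mono (piWeight_nonneg (piWeight_nonneg hw0 ℓ) r) hsub
    _ ≤ ((1 + prOf (piWeight w ℓ) Far) / √2) ^ r :=
        prOf_half_le (piWeight_nonneg hw0 ℓ) (sum_piWeight hw1 ℓ) (· ∈ Far) r
    _ ≤ (5 / (4 * √2)) ^ r := by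
        rw [div_mul_eq_div_div]
        have := prOf_nonneg (piWeight_nonneg hw0 ℓ) Far
        gcongr
        linarith

end Weights

open Weights

section Influence

variable {V : Type*} [Fintype V] [DecidableEq V] {p : ActFam V → ℝ} {H : Finset V → ℝ}
  {τ : ℕ}

lemma expectation_reach_eq_infl (S : Finset V) :
    expectation p (fun φ => H (reach φ S τ)) = infl p H τ S :=
  rfl

lemma infl_nonneg (hp : ∀ φ, 0 ≤ p φ) (hH : ∀ S, 0 ≤ H S) (S : Finset V) :
    0 ≤ infl p H τ S :=
  sum_nonneg fun φ _ => mul_nonneg (hp φ) (hH _)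

lemma finite_infl_card_le (s : ℕ) :
    {x : ℝ | ∃ S : Finset V, S.card ≤ s ∧ x = infl p H τ S}.Finite :=
  (Set.finite_range (infl p H τ)).subset <| by
    rintro _ ⟨S, -, rfl⟩
    exact ⟨S, rfl⟩

lemma infl_le_OPTs {s : ℕ} {S : Finset V} (hS : #S ≤ s) : infl p H τ S ≤ OPTs p H τ s :=
  le_csSup (finite_infl_card_le s).bddAbove ⟨S, hS, rfl⟩

lemma exists_infl_eq_OPTs (s : ℕ) :
    ∃ S : Finset V, #S ≤ s ∧ infl p H τ S = OPTs p H τ s := by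
  have hne : {x : ℝ | ∃ S : Finset V, S.card ≤ s ∧ x = infl p H τ S}.Nonempty :=
    ⟨_, ∅, by simp, rfl⟩
  obtain ⟨S, hS, hx⟩ := hne.csSup_mem (finite_infl_card_le s)
  exact ⟨S, hS, hx.symm⟩

lemma maxSingle_le_OPTs [Nonempty V] {s : ℕ} (hs : 1 ≤ s) :
    maxSingle p H τ ≤ OPTs p H τ s :=
  ciSup_le fun v => infl_le_OPTs (by simpa using hs)

lemma mul_OPTs_le_infl_of_accurate [Nonempty V] (hI : ∀ S, 0 ≤ infl p H τ S) {s : ℕ}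
    (hs : 1 ≤ s) {ε : ℝ} (hε : 0 ≤ ε) (m : Finset V → ℝ)
    (hm : ∀ S : Finset V, #S ≤ s →
      |m S - infl p H τ S| ≤ ε * max (infl p H τ S) (maxSingle p H τ))
    {T : Finset V} (hT : #T ≤ s) (hTmax : ∀ S : Finset V, #S ≤ s → m S ≤ m T) :
    (1 - 2 * ε) * OPTs p H τ s ≤ infl p H τ T := by
  obtain ⟨S, hS, hSO⟩ := exists_infl_eq_OPTs (p := p) (H := H) (τ := τ) s
  set O := OPTs p H τ s
  have hMO : maxSingle p H τ ≤ O := maxSingle_le_OPTs hs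
  have hO : 0 ≤ O := hSO ▸ hI S
  have hmS : (1 - ε) * O ≤ m S := by
    have := (abs_le.1 (hm S hS)).1
    rw [hSO, max_eq_left hMO] at this
    linarith
  rcases le_or_gt O (infl p H τ T) with hTO | hTO
  · linarith [mul_nonneg hε hO]
  · have herr : ε * max (infl p H τ T) (maxSingle p H τ) ≤ ε * O :=
      mul_le_mul_of_nonneg_left (max_le hTO.le hMO) hε
    linarith [(abs_le.1 (hm T hT)).2, hTmax S hS]

lemma four_mul_varReach_le {c ε : ℝ} (hvar : VarBoundC p H τ c) (hc : 0 ≤ c) {ℓ : ℕ}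
    (hℓ : 4 * c ≤ ℓ * ε ^ 2) (hI : ∀ S, 0 ≤ infl p H τ S) (S : Finset V) :
    4 * varReach p H τ S ≤ ℓ * (ε * max (infl p H τ S) (maxSingle p H τ)) ^ 2 := by
  set M := max (infl p H τ S) (maxSingle p H τ)
  have hIM : infl p H τ S ≤ M := le_max_left _ _
  calc 4 * varReach p H τ S ≤ 4 * (c * M * M) := by
        have := hvar S
        have : c * infl p H τ S * M ≤ c * M * M := by gcongr; exact (hI S).trans hIM
        linarith
    _ = 4 * c * M ^ 2 := by ring
    _ ≤ ℓ * ε ^ 2 * M ^ 2 := by gcongr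
    _ = ℓ * (ε * M) ^ 2 := by ring

end Influence

lemma card_filter_card_le_le {V : Type*} [Fintype V] (hV : 2 ≤ Fintype.card V) (s : ℕ) :
    #{S : Finset V | #S ≤ s} ≤ 2 * Fintype.card V ^ s := by
  classical
  set n := Fintype.card V
  calc #{S : Finset V | #S ≤ s}
      ≤ #((range (s + 1)).biUnion fun k => powersetCard k (univ : Finset V)) := by
        refine card_le_card fun S hS => ?_
        simp only [mem_filter, mem_univ, true_and] at hS
        simp only [mem_biUnion, mem_range, Order.lt_add_one_iff, mem_powersetCard, subset_univ,
          true_and, exists_eq_right']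
        exact hS
    _ ≤ ∑ k ∈ range (s + 1), #(powersetCard k (univ : Finset V)) := card_biUnion_le
    _ ≤ ∑ k ∈ range (s + 1), n ^ k := sum_le_sum fun k _ => by
        rw [card_powersetCard, card_univ]
        exact Nat.choose_le_pow _ _
    _ = ∑ k ∈ range s, n ^ k + n ^ s := sum_range_succ _ _
    _ ≤ 2 * n ^ s := by
        have := Nat.geomSum_lt hV (s := range s) (n := s) fun k hk => mem_range.1 hk
        omega

lemma two_mul_mul_pow_le {N δ : ℝ} (hN : 2 ≤ N) (hδ0 : 0 < δ) (hδ1 : δ < 1) {r : ℕ}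
    (hr : 28 * Real.log (N / δ) ≤ r) : 2 * N * (5 / (4 * √2)) ^ r ≤ δ := by
  have hq : 5 / (4 * √2) ≤ Real.exp (-(1 / 14)) := by
    have h2 : 7 / 5 ≤ √2 := (Real.le_sqrt (by norm_num) (by norm_num)).2 (by norm_num)
    have : 5 / (4 * √2) ≤ 13 / 14 := by
      rw [div_le_iff₀ (by positivity)]
      nlinarith
    linarith [Real.add_one_le_exp (-(1 / 14))]
  have hlog : Real.log (δ / N) = -Real.log (N / δ) := by rw [← Real.log_inv, inv_div]
  have hNδ : 2 ≤ N / δ := by rw [le_div_iff₀ hδ0]; nlinarith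
  have hL : 0 ≤ Real.log (N / δ) := Real.log_nonneg (by linarith)
  have hpow : (5 / (4 * √2)) ^ r ≤ δ / N * (δ / N) :=
    calc (5 / (4 * √2)) ^ r ≤ Real.exp (-(1 / 14)) ^ r :=
          pow_le_pow_left₀ (by positivity) hq r
      _ = Real.exp (r * -(1 / 14)) := (Real.exp_nat_mul _ r).symm
      _ ≤ Real.exp (Real.log (δ / N) + Real.log (δ / N)) :=
          Real.exp_le_exp.2 (by rw [hlog]; linarith)
      _ = δ / N * (δ / N) := by rw [Real.exp_add, Real.exp_log (by positivity)]
  calc 2 * N * (5 / (4 * √2)) ^ r ≤ 2 * N * (δ / N * (δ / N)) := by gcongr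
    _ = δ * (2 * δ / N) := by field_simp
    _ ≤ δ * 1 := by gcongr; rw [div_le_one (by linarith)]; linarith
    _ = δ := mul_one δ

lemma prOf_biUnion_card_le_le {V β : Type*} [Fintype V] [Fintype β] {w : β → ℝ}
    (hw0 : ∀ b, 0 ≤ w b) (B : Finset V → Set β) {s r : ℕ} (hs : 1 ≤ s)
    (hn : 2 ≤ Fintype.card V) {δ : ℝ} (hδ0 : 0 < δ) (hδ1 : δ < 1)
    (hr : 28 * Real.log ((Fintype.card V : ℝ) ^ s / δ) ≤ r)
    (hB : ∀ S, prOf w (B S) ≤ (5 / (4 * √2)) ^ r) :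
    prOf w (⋃ S ∈ ({S | #S ≤ s} : Finset (Finset V)), B S) ≤ δ :=
  calc _ ≤ ∑ S ∈ ({S | #S ≤ s} : Finset (Finset V)), prOf w (B S) := prOf_biUnion_le hw0 _ _
    _ ≤ 2 * (Fintype.card V : ℝ) ^ s * (5 / (4 * √2)) ^ r := by
        grw [sum_le_card_nsmul _ _ _ fun S _ => hB S, nsmul_eq_mul]
        gcongr
        exact_mod_cast card_filter_card_le_le hn s
    _ ≤ δ := two_mul_mul_pow_le
        (by exact_mod_cast hn.trans (le_self_pow₀ (by omega) (by omega))) hδ0 hδ1 hr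

theorem im_sample_complexity_general {V : Type*} [Fintype V] [DecidableEq V]
    (G : SDM V) (H : Finset V → ℝ)
    (hHnn : ∀ S, 0 ≤ H S)
    (hn : 2 ≤ Fintype.card V)
    (τ : ℕ) (c : ℝ) (hc : 1 ≤ c) (hvar : VarBoundC G.p H τ c)
    (s : ℕ) (hs : 1 ≤ s)
    (ε δ : ℝ) (hε0 : 0 < ε) (hδ0 : 0 < δ) (hδ1 : δ < 1)
    (r ℓ : ℕ)
    (hr : (r : ℝ) ≥ 28 * Real.log ((Fintype.card V : ℝ) ^ s / δ))
    (hℓ : (ℓ : ℝ) ≥ 4 * c / ε ^ 2)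
    (T : (Fin r → Fin ℓ → ActFam V) → Finset V)
    (hTcard : ∀ ω, (T ω).card ≤ s)
    (hTmax : ∀ ω, ∀ S : Finset V, S.card ≤ s →
      medianR (fun i => (1 / (ℓ : ℝ)) * ∑ j, H (reach (ω i j) S τ)) ≤
        medianR (fun i => (1 / (ℓ : ℝ)) * ∑ j, H (reach (ω i j) (T ω) τ))) :
    prOf (fun ω : Fin r → Fin ℓ → ActFam V => ∏ i, ∏ j, G.p (ω i j))
      {ω | (1 - 2 * ε) * OPTs G.p H τ s ≤ infl G.p H τ (T ω)} ≥ 1 - δ := by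
  classical
  have : Nonempty V := Fintype.card_pos_iff.1 (by omega)
  -- definitionally the weight `fun ω => ∏ i, ∏ j, G.p (ω i j)` of the statement
  set w := piWeight (piWeight G.p ℓ) r
  have hw0 : ∀ ω, 0 ≤ w ω := piWeight_nonneg (piWeight_nonneg G.nonneg ℓ) r
  have hI : ∀ S, 0 ≤ infl G.p H τ S := infl_nonneg G.nonneg hHnn
  have hℓε : 4 * c ≤ ℓ * ε ^ 2 := (div_le_iff₀ (by positivity)).1 hℓ
  have hℓ0 : ℓ ≠ 0 := by
    rintro rfl
    rw [Nat.cast_zero, zero_mul] at hℓε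
    linarith
  set Far : Finset V → Set (Fin r → Fin ℓ → ActFam V) := fun S =>
    {ω | ε * max (infl G.p H τ S) (maxSingle G.p H τ) <
      |medianR (fun i => 1 / (ℓ : ℝ) * ∑ j, H (reach (ω i j) S τ)) - infl G.p H τ S|}
  have hFar : ∀ S, prOf w (Far S) ≤ (5 / (4 * √2)) ^ r := by
    intro S
    have h := prOf_lt_abs_medianR_sub_le G.nonneg G.sum_one (fun φ => H (reach φ S τ)) hℓ0 r
      (mul_nonneg hε0.le ((hI S).trans (le_max_left _ _)))
      (four_mul_varReach_le hvar (by linarith) hℓε hI S)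
    rwa [expectation_reach_eq_infl] at h
  have hGood : (⋃ S ∈ ({S | #S ≤ s} : Finset (Finset V)), Far S)ᶜ ⊆
      {ω | (1 - 2 * ε) * OPTs G.p H τ s ≤ infl G.p H τ (T ω)} := by
    intro ω hω
    simp only [Set.mem_compl_iff, Set.mem_iUnion, mem_filter, mem_univ, true_and, not_exists] at hω
    exact mul_OPTs_le_infl_of_accurate hI hs hε0.le _ (fun S hS => not_lt.1 (hω S hS))
      (hTcard ω) (hTmax ω)
  calc 1 - δ ≤ prOf w (⋃ S ∈ ({S | #S ≤ s} : Finset (Finset V)), Far S)ᶜ := by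
        rw [prOf_compl (sum_piWeight (sum_piWeight G.sum_one ℓ) r)]
        linarith [prOf_biUnion_card_le_le hw0 Far hs hn hδ0 hδ1 hr hFar]
    _ ≤ _ := prOf_mono hw0 hGood

/-- **Sample complexity of influence maximization via the median-of-averages
oracle.**  For an SDM satisfying the variance bound with constant `c ≥ 1`, with
`r ≥ 28·ln(nˢ/δ)` pools of `ℓ ≥ 4·c·ε⁻²` i.i.d. simulations each, any maximizer
`T` (of size ≤ s) of the median-of-averages oracle satisfies
`I^τ(T) ≥ (1−2ε)·OPT^τ_s` with probability at least `1 − δ`. -/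
theorem im_sample_complexity {V : Type*} [Fintype V] [DecidableEq V]
    (G : SDM V) (H : Finset V → ℝ)
    (hH0 : H ∅ = 0) (hHnn : ∀ S, 0 ≤ H S) (hHmono : MonotoneFn H)
    (hn : 2 ≤ Fintype.card V)
    (τ : ℕ) (c : ℝ) (hc : 1 ≤ c) (hvar : VarBoundC G.p H τ c)
    (s : ℕ) (hs : 1 ≤ s)
    (ε δ : ℝ) (hε0 : 0 < ε) (hε1 : ε < 1) (hδ0 : 0 < δ) (hδ1 : δ < 1)
    (r ℓ : ℕ)
    (hr : (r : ℝ) ≥ 28 * Real.log ((Fintype.card V : ℝ) ^ s / δ))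
    (hℓ : (ℓ : ℝ) ≥ 4 * c / ε ^ 2)
    (T : (Fin r → Fin ℓ → ActFam V) → Finset V)
    (hTcard : ∀ ω, (T ω).card ≤ s)
    (hTmax : ∀ ω, ∀ S : Finset V, S.card ≤ s →
      medianR (fun i => (1 / (ℓ : ℝ)) * ∑ j, H (reach (ω i j) S τ)) ≤
        medianR (fun i => (1 / (ℓ : ℝ)) * ∑ j, H (reach (ω i j) (T ω) τ))) :
    prOf (fun ω : Fin r → Fin ℓ → ActFam V => ∏ i, ∏ j, G.p (ω i j))
      {ω | (1 - 2 * ε) * OPTs G.p H τ s ≤ infl G.p H τ (T ω)} ≥ 1 - δ :=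
  im_sample_complexity_general G H hHnn hn τ c hc hvar s hs ε δ hε0 hδ0 hδ1 r ℓ hr hℓ T hTcard hTmax
end

section
/- Let c ≥ 1 and M > 0 be reals, and let X_{ij}, for i = 1,…,r and j = 1,…,ℓ, be i.i.d. real-valued random variables with mean μ ≥ 0 and Var[X_{11}] ≤ c·μ·max{μ, M}. Let 0 < ε < 1 and 0 < δ < 1. If r ≥ 28·ln(1/δ) and ℓ ≥ 4·c·ε^{-2}, then Pr[ | Median_{i∈[r]} ( (1/ℓ) Σ_{j=1}^ℓ X_{ij} ) − μ | ≥ ε·max{μ, M} ] ≤ δ. -/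
open MeasureTheory ProbabilityTheory

/-!
By Chebyshev, the variance bound and `ℓ ≥ 4cε⁻²` make each row average miss `μ` by
`ε·max{μ, M}` with probability at most `1/4`; the rows are independent blocks of the
independent family `X`. If the median misses by that much, then at least half of the `r`
row averages miss, and Markov's inequality applied to `2 ^ #{rows that miss}`, whose
expectation factors into `∏ (1 + ℙ(row i misses)) ≤ (5/4) ^ r`, bounds the probability of that
by `(5/4) ^ r / 2 ^ (r/2) ≤ exp (-r/28) ≤ δ`.
-/

open Finset

lemma List.countP_ofFn {α : Type*} {r : ℕ} (y : Fin r → α) (q : α → Prop) [DecidablePred q] :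
    (List.ofFn y).countP (q ·) = #{i | q (y i)} := by
  rw [List.ofFn_eq_map, List.countP_map, Finset.card, Finset.filter_val, Fin.univ_def,
    Multiset.filter_coe, Multiset.coe_card, List.countP_eq_length_filter]
  rfl

lemma List.Pairwise.succ_le_countP_le_getElem {α : Type*} [Preorder α] [DecidableLE α]
    {l : List α} (hl : l.Pairwise (· ≤ ·)) {k : ℕ} (hk : k < l.length) :
    k + 1 ≤ l.countP (· ≤ l[k]) := by
  have hle : ∀ x ∈ l.take (k + 1), x ≤ l[k] := by
    intro x hx
    obtain ⟨j, hj, rfl⟩ := List.getElem_of_mem hx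
    rw [List.getElem_take]
    simp only [List.length_take] at hj
    rcases (show j < k ∨ j = k by omega) with hjk | rfl
    · exact List.pairwise_iff_getElem.mp hl j k (by omega) hk hjk
    · exact le_rfl
  calc k + 1 = (l.take (k + 1)).length := by simp; omega
    _ = (l.take (k + 1)).countP (· ≤ l[k]) := (List.countP_eq_length.mpr (by simpa using hle)).symm
    _ ≤ l.countP (· ≤ l[k]) := (List.take_sublist _ _).countP_le

lemma List.Pairwise.length_sub_le_countP_getElem_le {α : Type*} [Preorder α] [DecidableLE α]
    {l : List α} (hl : l.Pairwise (· ≤ ·)) {k : ℕ} (hk : k < l.length) :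
    l.length - k ≤ l.countP (l[k] ≤ ·) := by
  have hle : ∀ x ∈ l.drop k, l[k] ≤ x := by
    intro x hx
    obtain ⟨j, hj, rfl⟩ := List.getElem_of_mem hx
    rw [List.getElem_drop]
    simp only [List.length_drop] at hj
    rcases Nat.eq_zero_or_pos j with rfl | hj0
    · exact le_rfl
    · exact List.pairwise_iff_getElem.mp hl k (k + j) hk (by omega) (by omega)
  calc l.length - k = (l.drop k).length := by simp
    _ = (l.drop k).countP (l[k] ≤ ·) := (List.countP_eq_length.mpr (by simpa using hle)).symm
    _ ≤ l.countP (l[k] ≤ ·) := (List.drop_sublist _ _).countP_le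

lemma medianR_eq_getElem {r : ℕ} (hr : r ≠ 0) (y : Fin r → ℝ) :
    medianR y = ((List.ofFn y).mergeSort (· ≤ ·))[(r + 1) / 2 - 1]'(by simp; omega) :=
  List.getD_eq_getElem _ _ _

lemma le_two_mul_card_medianR_le {r : ℕ} (y : Fin r → ℝ) : r ≤ 2 * #{i | medianR y ≤ y i} := by
  rcases eq_or_ne r 0 with rfl | hr
  · simp
  rw [medianR_eq_getElem hr, ← List.countP_ofFn y (_ ≤ ·),
    ← (List.mergeSort_perm (List.ofFn y) (· ≤ ·)).countP_eq]
  have := (List.pairwise_mergeSort' (· ≤ ·) (List.ofFn y)).length_sub_le_countP_getElem_le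
    (k := (r + 1) / 2 - 1) (by simp; omega)
  simp only [List.length_mergeSort, List.length_ofFn] at this
  omega

lemma le_two_mul_card_le_medianR {r : ℕ} (y : Fin r → ℝ) : r ≤ 2 * #{i | y i ≤ medianR y} := by
  rcases eq_or_ne r 0 with rfl | hr
  · simp
  rw [medianR_eq_getElem hr, ← List.countP_ofFn y (· ≤ _),
    ← (List.mergeSort_perm (List.ofFn y) (· ≤ ·)).countP_eq]
  have := (List.pairwise_mergeSort' (· ≤ ·) (List.ofFn y)).succ_le_countP_le_getElem
    (k := (r + 1) / 2 - 1) (by simp; omega)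
  omega

lemma le_two_mul_card_of_le_abs_medianR_sub {r : ℕ} {y : Fin r → ℝ} {a t : ℝ}
    (h : t ≤ |medianR y - a|) : r ≤ 2 * #{i | t ≤ |y i - a|} := by
  rcases le_abs'.mp h with h | h
  · refine (le_two_mul_card_le_medianR y).trans (Nat.mul_le_mul_left 2 (card_le_card ?_))
    intro i
    simp only [mem_filter, mem_univ, true_and]
    intro hi
    exact le_abs'.mpr (Or.inl (by linarith))
  · refine (le_two_mul_card_medianR_le y).trans (Nat.mul_le_mul_left 2 (card_le_card ?_))
    intro i
    simp only [mem_filter, mem_univ, true_and]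
    intro hi
    exact le_abs'.mpr (Or.inr (by linarith))

section Independence

open Measure

variable {Ω ι κ : Type*} {mΩ : MeasurableSpace Ω} {P : Measure Ω}

lemma ProbabilityTheory.iIndepFun.curry {β : Type*} [MeasurableSpace β] {X : ι × κ → Ω → β}
    (mX : ∀ p, Measurable (X p)) (h : iIndepFun X P) :
    iIndepFun (fun i ω j ↦ X (i, j) ω) P := by
  have := h.isProbabilityMeasure
  have : ∀ p, IsProbabilityMeasure (P.map (X p)) :=
    fun p ↦ isProbabilityMeasure_map (mX p).aemeasurable
  have hrow (i : ι) : P.map (fun ω j ↦ X (i, j) ω) = infinitePi fun j ↦ P.map (X (i, j)) :=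
    (iIndepFun_iff_map_fun_eq_infinitePi_map fun j ↦ mX (i, j)).1
      (h.precomp (Prod.mk_right_injective i))
  rw [iIndepFun_iff_map_fun_eq_infinitePi_map fun i ↦ measurable_pi_lambda _ fun j ↦ mX (i, j)]
  calc P.map (fun ω i j ↦ X (i, j) ω)
      = (P.map fun ω p ↦ X p ω).map (MeasurableEquiv.curry ι κ β) := by
        rw [map_map (by fun_prop) (measurable_pi_lambda _ mX)]; rfl
    _ = infinitePi fun i ↦ infinitePi fun j ↦ P.map (X (i, j)) := by
        rw [(iIndepFun_iff_map_fun_eq_infinitePi_map mX).1 h]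
        exact infinitePi_map_curry fun i j ↦ P.map (X (i, j))
    _ = infinitePi fun i ↦ P.map (fun ω j ↦ X (i, j) ω) := by simp_rw [hrow]

lemma ProbabilityTheory.iIndepFun.iIndepSet_preimage {β : ι → Type*}
    {mβ : ∀ i, MeasurableSpace (β i)} {Y : ∀ i, Ω → β i} (mY : ∀ i, Measurable (Y i))
    (h : iIndepFun Y P) {B : ∀ i, Set (β i)} (hB : ∀ i, MeasurableSet (B i)) :
    iIndepSet (fun i ↦ Y i ⁻¹' B i) P :=
  (iIndepSet_iff_meas_biInter fun i ↦ mY i (hB i)).2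
    fun S ↦ h.measure_inter_preimage_eq_mul S fun i _ ↦ hB i

lemma measureReal_le_abs_average_sub_le [IsFiniteMeasure P] [Fintype ι] [Nonempty ι]
    {Y : ι → Ω → ℝ} (hY : ∀ j, MemLp (Y j) 2 P)
    (hind : Pairwise fun j j' ↦ IndepFun (Y j) (Y j') P)
    {m v t : ℝ} (hmean : ∀ j, P[Y j] = m) (hvar : ∀ j, variance (Y j) P ≤ v) (ht : 0 < t) :
    P.real {ω | t ≤ |(1 / Fintype.card ι) * ∑ j, Y j ω - m|} ≤ v / (Fintype.card ι * t ^ 2) := by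
  set n : ℝ := (Fintype.card ι : ℝ)
  have hn : 0 < n := by positivity
  set S : Ω → ℝ := fun ω ↦ (1 / n) * ∑ j, Y j ω
  have hS : MemLp S 2 P := (memLp_finsetSum _ fun j _ ↦ hY j).const_mul _
  have hmeanS : P[S] = m := by
    simp only [S, integral_const_mul, integral_finsetSum _ fun j _ ↦ (hY j).integrable one_le_two,
      hmean, sum_const, card_univ, nsmul_eq_mul, n]
    field_simp
  have hvarS : variance S P ≤ v / n := by
    rw [variance_const_mul, ← Finset.sum_fn, IndepFun.variance_sum (fun j _ ↦ hY j)
      fun j _ j' _ hjj' ↦ hind hjj']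
    calc (1 / n) ^ 2 * ∑ j, variance (Y j) P ≤ (1 / n) ^ 2 * ∑ _j : ι, v := by
          gcongr with j; exact hvar j
      _ = v / n := by simp only [sum_const, card_univ, nsmul_eq_mul, n]; field_simp
  have hcheb := meas_ge_le_variance_div_sq hS ht
  rw [hmeanS] at hcheb
  calc _ ≤ variance S P / t ^ 2 := ENNReal.toReal_le_of_le_ofReal
          (div_nonneg (variance_nonneg _ _) (sq_nonneg _)) hcheb
    _ ≤ v / (n * t ^ 2) := by rw [← div_div]; gcongr

lemma integral_prod_one_add_mul_indicator [Fintype ι] {A : ι → Set Ω}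
    (hA : ∀ i, MeasurableSet (A i)) (hind : iIndepSet A P) (b : ℝ) :
    ∫ ω, ∏ i, (1 + b * (A i).indicator (fun _ ↦ 1) ω) ∂P = ∏ i, (1 + b * P.real (A i)) := by
  have := hind.isProbabilityMeasure
  rw [(hind.iIndepFun_indicator (β := ℝ)).integral_fun_prod_comp (f := fun _ x ↦ 1 + b * x)
    (fun i ↦ (measurable_const.indicator (hA i)).aemeasurable)
    fun i ↦ (by fun_prop : Measurable fun x : ℝ ↦ 1 + b * x).aestronglyMeasurable]
  congr with i
  rw [integral_add (integrable_const _) (((integrable_const _).indicator (hA i)).const_mul b),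
    integral_const_mul, integral_indicator (hA i)]
  simp

open scoped Classical in
theorem measureReal_le_card_le_of_iIndepSet [Fintype ι] {A : ι → Set Ω}
    (hA : ∀ i, MeasurableSet (A i)) (hind : iIndepSet A P) {p a : ℝ}
    (hp : ∀ i, P.real (A i) ≤ p) (ha : 1 ≤ a) (k : ℝ) :
    P.real {ω | k ≤ #{i | ω ∈ A i}} ≤ (1 + (a - 1) * p) ^ Fintype.card ι / a ^ k := by
  have := hind.isProbabilityMeasure
  set Z : Ω → ℝ := fun ω ↦ ∏ i, (1 + (a - 1) * (A i).indicator (fun _ ↦ 1) ω)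
  have hZ (ω : Ω) : Z ω = a ^ #{i | ω ∈ A i} := by
    simp only [Z, Set.indicator_apply, mul_ite, mul_one, mul_zero, add_ite, add_sub_cancel,
      add_zero, prod_ite, prod_const_one, mul_one, prod_const]
  have hZint : Integrable Z P := by
    refine Integrable.of_bound (C := a ^ Fintype.card ι) ?_ (ae_of_all _ fun ω ↦ ?_)
    · exact (Finset.measurable_prod _ fun i _ ↦
        (measurable_const.indicator (hA i)).const_mul _ |>.const_add _).aestronglyMeasurable
    · rw [hZ, Real.norm_of_nonneg (by positivity)]
      exact pow_le_pow_right₀ ha (card_le_univ _)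
  have hmarkov := mul_meas_ge_le_integral_of_nonneg
    (ae_of_all _ fun ω ↦ (hZ ω).symm ▸ by positivity) hZint (a ^ k)
  have hsub : {ω | k ≤ #{i | ω ∈ A i}} ⊆ {ω | a ^ k ≤ Z ω} := fun ω hω ↦ by
    simp only [Set.mem_ofPred_eq, hZ, ← Real.rpow_natCast] at hω ⊢
    exact Real.rpow_le_rpow_of_exponent_le ha hω
  have hEZ : ∫ ω, Z ω ∂P ≤ (1 + (a - 1) * p) ^ Fintype.card ι := by
    rw [integral_prod_one_add_mul_indicator hA hind, ← card_univ, ← prod_const]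
    gcongr with i
    exact hp i
  rw [le_div_iff₀ (Real.rpow_pos_of_pos (by linarith) k), mul_comm]
  exact ((mul_le_mul_of_nonneg_left (measureReal_mono hsub) (by positivity)).trans hmarkov).trans hEZ

end Independence

lemma five_div_four_pow_div_two_rpow_le {r : ℕ} {δ : ℝ} (hδ : 0 < δ)
    (hr : 28 * Real.log (1 / δ) ≤ r) : (5 / 4 : ℝ) ^ r / 2 ^ ((r : ℝ) / 2) ≤ δ := by
  rw [← Real.log_le_log_iff (by positivity) hδ, Real.log_div (by positivity) (by positivity),
    Real.log_pow, Real.log_rpow two_pos]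
  have h54 : Real.log (5 / 4) ≤ 1 / 4 := by
    have := Real.log_le_sub_one_of_pos (show (0 : ℝ) < 5 / 4 by norm_num); linarith
  have h2 := Real.log_two_gt_d9
  rw [one_div, Real.log_inv] at hr
  have hr0 : (0 : ℝ) ≤ r := r.cast_nonneg
  nlinarith

lemma mul_max_div_mul_sq_le_one_div_four {c M μ ε ℓ : ℝ} (hc : 0 < c) (hM : 0 < M) (hε : 0 < ε)
    (hℓ : 4 * c / ε ^ 2 ≤ ℓ) : c * μ * max μ M / (ℓ * (ε * max μ M) ^ 2) ≤ 1 / 4 := by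
  have hm : 0 < max μ M := hM.trans_le (le_max_right μ M)
  have h4c : 4 * c ≤ ℓ * ε ^ 2 := (div_le_iff₀ (by positivity)).1 hℓ
  have hℓ0 : 0 < ℓ := by nlinarith
  rw [div_le_iff₀ (by positivity)]
  have hμm : c * μ * max μ M ≤ c * max μ M * max μ M := by gcongr; exact le_max_left μ M
  nlinarith [mul_le_mul_of_nonneg_right h4c (sq_nonneg (max μ M))]

theorem median_of_averages_general {Ω : Type*} [MeasureSpace Ω] [IsProbabilityMeasure (ℙ : Measure Ω)]
    (c M μ ε δ : ℝ) (hc : 1 ≤ c) (hM : 0 < M)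
    (hε0 : 0 < ε) (hδ0 : 0 < δ)
    (r ℓ : ℕ) (hr : (r : ℝ) ≥ 28 * Real.log (1 / δ)) (hℓ : (ℓ : ℝ) ≥ 4 * c / ε ^ 2)
    (X : Fin r × Fin ℓ → Ω → ℝ)
    (hmeas : ∀ ij, Measurable (X ij))
    (hL2 : ∀ ij, MemLp (X ij) 2 ℙ)
    (hindep : iIndepFun X ℙ)
    (hmean : ∀ ij, ∫ ω, X ij ω ∂ℙ = μ)
    (hvar : ∀ ij, variance (X ij) ℙ ≤ c * μ * max μ M) :
    ℙ {ω | ε * max μ M ≤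
        |medianR (fun i => (1 / (ℓ : ℝ)) * ∑ j, X (i, j) ω) - μ|} ≤ ENNReal.ofReal δ := by
  classical
  set m := max μ M
  have hℓ0 : (0 : ℝ) < ℓ := lt_of_lt_of_le (by positivity) hℓ
  have : Nonempty (Fin ℓ) := Fin.pos_iff_nonempty.mp (by exact_mod_cast hℓ0)
  set B : Set (Fin ℓ → ℝ) := {y | ε * m ≤ |(1 / (ℓ : ℝ)) * ∑ j, y j - μ|}
  have hB : MeasurableSet B := measurableSet_le measurable_const (by fun_prop)
  have hrow (i : Fin r) : Measurable fun ω j ↦ X (i, j) ω :=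
    measurable_pi_lambda _ fun j ↦ hmeas (i, j)
  set A : Fin r → Set Ω := fun i ↦ (fun ω j ↦ X (i, j) ω) ⁻¹' B
  have hA (i : Fin r) : (ℙ : Measure Ω).real (A i) ≤ 1 / 4 := by
    have hcheb := measureReal_le_abs_average_sub_le (t := ε * m) (fun j ↦ hL2 (i, j))
      (fun j j' hjj' ↦ hindep.indepFun (by simpa using hjj')) (fun j ↦ hmean (i, j))
      (fun j ↦ hvar (i, j)) (by positivity)
    rw [Fintype.card_fin] at hcheb
    exact hcheb.trans (mul_max_div_mul_sq_le_one_div_four (by positivity) hM hε0 hℓ)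
  have hind : iIndepSet A ℙ := (hindep.curry hmeas).iIndepSet_preimage hrow fun _ ↦ hB
  have hsub : {ω | ε * m ≤ |medianR (fun i => (1 / (ℓ : ℝ)) * ∑ j, X (i, j) ω) - μ|} ⊆
      {ω | (r : ℝ) / 2 ≤ #{i | ω ∈ A i}} := fun ω hω ↦ by
    have := le_two_mul_card_of_le_abs_medianR_sub hω
    simp only [Set.mem_ofPred_eq, Set.mem_preimage, A, B]
    rw [div_le_iff₀ two_pos, mul_comm]
    exact_mod_cast (by convert this using 3 : r ≤ 2 * _)
  rw [ENNReal.le_ofReal_iff_toReal_le (measure_ne_top _ _) hδ0.le]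
  calc (ℙ : Measure Ω).real _ ≤ (ℙ : Measure Ω).real {ω | (r : ℝ) / 2 ≤ #{i | ω ∈ A i}} :=
        measureReal_mono hsub
    _ ≤ (5 / 4) ^ r / 2 ^ ((r : ℝ) / 2) := by
        convert measureReal_le_card_le_of_iIndepSet (fun i ↦ hrow i hB) hind hA one_le_two _
          using 2
        norm_num
    _ ≤ δ := five_div_four_pow_div_two_rpow_le hδ0 hr

/-- **Median-of-averages guarantee (abstract form).**  If the `X_{ij}` are i.i.d. with
mean `μ ≥ 0` and `Var[X_{11}] ≤ c·μ·max{μ,M}`, and `r ≥ 28·ln(1/δ)`, `ℓ ≥ 4·c·ε⁻²`,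
then the median over `i` of the averages over `j` deviates from `μ` by at least
`ε·max{μ,M}` with probability at most `δ`. -/
theorem median_of_averages {Ω : Type*} [MeasureSpace Ω] [IsProbabilityMeasure (ℙ : Measure Ω)]
    (c M μ ε δ : ℝ) (hc : 1 ≤ c) (hM : 0 < M) (hμ : 0 ≤ μ)
    (hε0 : 0 < ε) (hε1 : ε < 1) (hδ0 : 0 < δ) (hδ1 : δ < 1)
    (r ℓ : ℕ) (hr : (r : ℝ) ≥ 28 * Real.log (1 / δ)) (hℓ : (ℓ : ℝ) ≥ 4 * c / ε ^ 2)
    (X : Fin r × Fin ℓ → Ω → ℝ)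
    (hmeas : ∀ ij, Measurable (X ij))
    (hL2 : ∀ ij, MemLp (X ij) 2 ℙ)
    (hindep : iIndepFun X ℙ)
    (hident : ∀ ij ij', IdentDistrib (X ij) (X ij') ℙ ℙ)
    (hmean : ∀ ij, ∫ ω, X ij ω ∂ℙ = μ)
    (hvar : ∀ ij, variance (X ij) ℙ ≤ c * μ * max μ M) :
    ℙ {ω | ε * max μ M ≤
        |medianR (fun i => (1 / (ℓ : ℝ)) * ∑ j, X (i, j) ω) - μ|} ≤ ENNReal.ofReal δ :=
  median_of_averages_general c M μ ε δ hc hM hε0 hδ0 r ℓ hr hℓ X hmeas hL2 hindep hmean hvar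
end

section
/- Fix an integer τ ≥ 1. Consider the complete rooted binary tree of depth τ with each edge live independently with probability 1/2, and let X be the number of nonempty binary strings v of length at most τ such that every edge on the path from the root to v is live (equivalently, the number of non-seed nodes activated within τ diffusion steps from the root). Then E[X] = τ and Var[X] ≥ (1/12)·τ·(E[X])², i.e. Var[X] ≥ τ³/12. Hence the linear dependence on τ in the variance upper bound for Independent Cascade models is necessary. -/
open Finset

/-- The non-root nodes of the complete rooted binary tree of depth `τ`: a node at
depth `d + 1` (for `d : Fin τ`) is given by its `d + 1` branching bits.  Each such
node is identified with its unique incoming edge. -/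
abbrev TreeNode (τ : ℕ) := Σ d : Fin τ, (Fin (d.1 + 1) → Bool)

/-- `isLivePath ω v` : every edge on the path from the root to `v` is live under the
edge-liveness assignment `ω`. -/
def isLivePath {τ : ℕ} (ω : TreeNode τ → Bool) (v : TreeNode τ) : Prop :=
  ∀ (k : Fin τ) (h : k.1 ≤ v.1.1),
    ω ⟨k, fun i => v.2 (Fin.castLE (Nat.succ_le_succ h) i)⟩ = true

open Classical in
/-- The number of non-seed nodes activated within `τ` diffusion steps from the root,
i.e. the number of nonempty binary strings of length at most `τ` whose root-path
consists of live edges. -/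
noncomputable def numActive (τ : ℕ) (ω : TreeNode τ → Bool) : ℝ :=
  ∑ v : TreeNode τ, if isLivePath ω v then 1 else 0

/-- Expectation under the uniform measure on edge-liveness assignments, i.e. each
edge is live independently with probability `1/2`. -/
noncomputable def treeExp (τ : ℕ) (f : (TreeNode τ → Bool) → ℝ) : ℝ :=
  (1 / (Fintype.card (TreeNode τ → Bool) : ℝ)) * ∑ ω : TreeNode τ → Bool, f ω

/-!
Write `X = ∑ᵥ 1[every edge on the root path of v is live]`. A fixed set `T` of edges is all live
with probability `2^{-|T|}`, so `E X = ∑ᵥ 2^{-|v|} = τ`, and the covariance of the indicators of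
`u` and `v` is `2^{-|u|-|v|} (2^c - 1)`, where `c` is the number of edges shared by the two root
paths. The shared edges are the first `c` edges of either path, so `2^c - 1 = ∑ 2^{|e|-1}` over
the shared edges `e`. Exchanging the sums gives `Var X = ∑ₑ 2^{|e|-1} Wₑ²` with
`Wₑ = ∑_{u below e} 2^{-|u|} = (τ - |e| + 1) 2^{-|e|}`, hence
`Var X = ½ ∑_{m ≤ τ} m² = τ(τ+1)(2τ+1)/12 ≥ τ³/12`.
-/

open scoped BigOperators

theorem expect_sq_sub_expect {ι : Type*} [Fintype ι] [Nonempty ι] (f : ι → ℝ) :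
    𝔼 i, (f i - 𝔼 j, f j) ^ 2 = 𝔼 i, f i ^ 2 - (𝔼 i, f i) ^ 2 := by
  simp only [sub_sq, expect_add_distrib, expect_sub_distrib, ← expect_mul, ← mul_expect,
    Fintype.expect_const]
  ring

section LiveEdges

variable {α : Type*} [Fintype α] [DecidableEq α]

theorem card_filter_forall_mem_eq (T : Finset α) (c : α → Bool) :
    #{ω : α → Bool | ∀ a ∈ T, ω a = c a} = 2 ^ (Fintype.card α - #T) := by
  have hpi : ({ω : α → Bool | ∀ a ∈ T, ω a = c a} : Finset _) =
      Fintype.piFinset fun a => if a ∈ T then {c a} else univ := by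
    ext ω
    simp only [mem_filter, mem_univ, true_and, Fintype.mem_piFinset]
    refine forall_congr' fun a => ?_
    split_ifs <;> simp [*]
  rw [hpi, Fintype.card_piFinset]
  simp [apply_ite, prod_ite, filter_not, card_sdiff]

theorem card_filter_comp_embedding_eq {β : Type*} [Fintype β] (ι : β ↪ α) (g : β → Bool) :
    #{ω : α → Bool | ∀ b, ω (ι b) = g b} = 2 ^ (Fintype.card α - Fintype.card β) := by
  have hcomp (ω : α → Bool) : (∀ b, ω (ι b) = g b) ↔
      ∀ a ∈ univ.map ι, ω a = Function.extend ι g (fun _ => false) a := by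
    simp [ι.injective.extend_apply]
  simp only [hcomp, card_filter_forall_mem_eq, card_map, card_univ]

-- Defined under `[Fintype α] [DecidableEq α]` so that its decidability instance is the one
-- `sum_boole` synthesizes for `Finset.filter`.
def liveIndicator (T : Finset α) (ω : α → Bool) : ℝ :=
  if ∀ a ∈ T, ω a = true then 1 else 0

theorem liveIndicator_mul_liveIndicator (A B : Finset α) (ω : α → Bool) :
    liveIndicator A ω * liveIndicator B ω = liveIndicator (A ∪ B) ω := by
  simp only [liveIndicator, mem_union, or_imp, forall_and]
  split_ifs <;> simp_all

theorem expect_liveIndicator (T : Finset α) :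
    𝔼 ω, liveIndicator T ω = (2 ^ #T)⁻¹ := by
  rw [Fintype.expect_eq_sum_div_card]
  simp only [liveIndicator, sum_boole, card_filter_forall_mem_eq T fun _ => true,
    Fintype.card_fun, Fintype.card_bool]
  push_cast
  rw [pow_sub₀ _ two_ne_zero (card_le_univ T)]
  field_simp

variable {V : Type*} [Fintype V] (P : V → Finset α)

theorem expect_sum_liveIndicator :
    𝔼 ω, ∑ v, liveIndicator (P v) ω = ∑ v, (2 ^ #(P v))⁻¹ := by
  rw [expect_sum_comm]
  simp only [expect_liveIndicator]

theorem expect_sq_sub_expect_sum_liveIndicator :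
    𝔼 ω, (∑ v, liveIndicator (P v) ω - 𝔼 ω', ∑ v, liveIndicator (P v) ω') ^ 2 =
      ∑ u, ∑ v, (2 ^ #(P u))⁻¹ * (2 ^ #(P v))⁻¹ * (2 ^ #(P u ∩ P v) - 1) := by
  rw [expect_sq_sub_expect, expect_sum_liveIndicator]
  simp only [sq, sum_mul_sum, liveIndicator_mul_liveIndicator]
  rw [expect_sum_comm]
  simp only [expect_sum_comm, expect_liveIndicator, ← sum_sub_distrib]
  refine sum_congr rfl fun u _ => sum_congr rfl fun v _ => ?_
  have hcard : (2:ℝ) ^ #(P u ∪ P v) = 2 ^ #(P u) * 2 ^ #(P v) / 2 ^ #(P u ∩ P v) := by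
    rw [eq_div_iff (by positivity), ← pow_add, ← pow_add, card_union_add_card_inter]
  rw [hcard]
  field_simp

theorem sum_sum_mul_sum_inter (w : V → ℝ) (g : α → ℝ) :
    ∑ u, ∑ v, w u * w v * ∑ e ∈ P u ∩ P v, g e = ∑ e, g e * (∑ u with e ∈ P u, w u) ^ 2 := by
  have hinter (u v : V) : w u * w v * ∑ e ∈ P u ∩ P v, g e =
      ∑ e, g e * ((if e ∈ P u then w u else 0) * (if e ∈ P v then w v else 0)) := by
    rw [mul_sum, ← univ_inter (P u ∩ P v), ← sum_ite_mem]
    refine sum_congr rfl fun e _ => ?_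
    by_cases hu : e ∈ P u <;> by_cases hv : e ∈ P v <;> simp [hu, hv, mul_comm]
  simp only [hinter, sq, sum_filter, sum_mul, mul_sum]
  rw [sum_comm]
  exact (sum_congr rfl fun v _ => sum_comm).trans sum_comm

end LiveEdges

theorem Finset.eq_range_card_of_isLowerSet {s : Finset ℕ} (hs : IsLowerSet (s : Set ℕ)) :
    s = range #s := by
  refine eq_of_subset_of_card_le (fun k hk => mem_range.2 ?_) (card_range _).le
  have : Iic k ⊆ s := fun j hj => hs (mem_Iic.1 hj) hk
  simpa using card_le_card this

theorem sum_range_natCast_sub_sq (n : ℕ) :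
    ∑ d ∈ range n, ((n : ℝ) - d) ^ 2 = n * (n + 1) * (2 * n + 1) / 6 := by
  induction n with
  | zero => simp
  | succ n ih =>
    rw [sum_range_succ']
    simp only [Nat.cast_succ, add_sub_add_right_eq_sub, ih]
    ring

namespace TreeNode

variable {τ : ℕ}

def ancestor (v : TreeNode τ) (k : Fin τ) (hk : k.1 ≤ v.1.1) : TreeNode τ :=
  ⟨k, fun i => v.2 (Fin.castLE (Nat.succ_le_succ hk) i)⟩

def path (v : TreeNode τ) : Finset (TreeNode τ) :=
  {e | ∃ h : e.1.1 ≤ v.1.1, ∀ i, e.2 i = v.2 (Fin.castLE (Nat.succ_le_succ h) i)}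

theorem mem_path {e v : TreeNode τ} :
    e ∈ path v ↔ ∃ h : e.1.1 ≤ v.1.1, ∀ i, e.2 i = v.2 (Fin.castLE (Nat.succ_le_succ h) i) := by
  simp [path]

theorem ancestor_mem_path (v : TreeNode τ) (k : Fin τ) (hk : k.1 ≤ v.1.1) :
    v.ancestor k hk ∈ path v :=
  mem_path.2 ⟨hk, fun _ => rfl⟩

theorem eq_ancestor_of_mem_path {e v : TreeNode τ} (he : e ∈ path v) :
    ∃ h, e = v.ancestor e.1 h := by
  obtain ⟨h, he⟩ := mem_path.1 he
  exact ⟨h, Sigma.ext rfl (heq_of_eq (funext he))⟩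

theorem ancestor_mem_path_of_mem {e v : TreeNode τ} (he : e ∈ path v) (j : Fin τ)
    (hj : j.1 ≤ e.1.1) : e.ancestor j hj ∈ path v := by
  obtain ⟨h, he⟩ := mem_path.1 he
  exact mem_path.2 ⟨hj.trans h, fun i => he _⟩

theorem isLivePath_iff_forall_mem_path (ω : TreeNode τ → Bool) (v : TreeNode τ) :
    isLivePath ω v ↔ ∀ e ∈ path v, ω e = true := by
  refine ⟨fun hv e he => ?_, fun hv k hk => hv _ (ancestor_mem_path v k hk)⟩
  obtain ⟨h, he⟩ := eq_ancestor_of_mem_path he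
  rw [he]
  exact hv _ h

theorem injOn_depth_path (v : TreeNode τ) : Set.InjOn (fun e : TreeNode τ => e.1.1) (path v) := by
  rintro ⟨⟨d, hd⟩, f⟩ he ⟨⟨d', hd'⟩, f'⟩ he' (rfl : d = d')
  obtain ⟨_, hf⟩ := mem_path.1 he
  obtain ⟨_, hf'⟩ := mem_path.1 he'
  exact Sigma.ext rfl (heq_of_eq (funext fun i => (hf i).trans (hf' i).symm))

theorem image_depth_path (v : TreeNode τ) :
    (path v).image (fun e => e.1.1) = range (v.1.1 + 1) := by
  ext k
  simp only [mem_image, mem_range]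
  refine ⟨fun ⟨e, he, hek⟩ => hek ▸ Nat.lt_succ_of_le (mem_path.1 he).1, fun hk => ?_⟩
  have hkv : k ≤ v.1.1 := Nat.le_of_lt_succ hk
  exact ⟨v.ancestor ⟨k, hkv.trans_lt v.1.2⟩ hkv, ancestor_mem_path _ _ _, rfl⟩

theorem card_path (v : TreeNode τ) : #(path v) = v.1.1 + 1 := by
  rw [← card_range (v.1.1 + 1), ← image_depth_path, card_image_of_injOn (injOn_depth_path v)]

theorem sum_two_pow_depth_inter_path (u v : TreeNode τ) :
    ∑ e ∈ path u ∩ path v, (2:ℝ) ^ e.1.1 = 2 ^ #(path u ∩ path v) - 1 := by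
  set S := path u ∩ path v
  have hinj : Set.InjOn (fun e : TreeNode τ => e.1.1) S :=
    (injOn_depth_path u).mono inter_subset_left
  have hlower : IsLowerSet (S.image fun e => e.1.1 : Set ℕ) := by
    intro k j hjk hk
    obtain ⟨e, he, rfl⟩ := mem_image.1 (mem_coe.1 hk)
    have hj : j < τ := hjk.trans_lt e.1.2
    refine mem_coe.2 (mem_image.2 ⟨e.ancestor ⟨j, hj⟩ hjk, ?_, rfl⟩)
    exact mem_inter.2 ⟨ancestor_mem_path_of_mem (mem_inter.1 he).1 _ _,
      ancestor_mem_path_of_mem (mem_inter.1 he).2 _ _⟩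
  rw [← sum_image hinj, eq_range_card_of_isLowerSet hlower, card_image_of_injOn hinj,
    geom_sum_eq (by norm_num : (2:ℝ) ≠ 1)]
  norm_num

theorem card_filter_mem_path (e : TreeNode τ) (d : Fin τ) (hd : e.1.1 ≤ d.1) :
    #{f : Fin (d.1 + 1) → Bool | e ∈ path ⟨d, f⟩} = 2 ^ (d.1 - e.1.1) := by
  have hmem (f : Fin (d.1 + 1) → Bool) :
      e ∈ path ⟨d, f⟩ ↔ ∀ i, f (Fin.castLEEmb (Nat.add_le_add_right hd 1) i) = e.2 i := by
    simp only [mem_path, hd, exists_true_left, Fin.castLEEmb_apply]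
    exact forall_congr' fun _ => eq_comm
  have hcard := card_filter_comp_embedding_eq (Fin.castLEEmb (Nat.add_le_add_right hd 1)) e.2
  rw [Fintype.card_fin, Fintype.card_fin, Nat.add_sub_add_right] at hcard
  rw [filter_congr fun f _ => hmem f]
  convert hcard

theorem sum_filter_mem_path_inv_two_pow_card (e : TreeNode τ) :
    ∑ u with e ∈ path u, ((2:ℝ) ^ #(path u))⁻¹ = (τ - e.1.1) / 2 ^ (e.1.1 + 1) := by
  have hdepth (d : Fin τ) : ∑ f with e ∈ path ⟨d, f⟩, ((2:ℝ) ^ (d.1 + 1))⁻¹ =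
      if e.1 ≤ d then (2 ^ (e.1.1 + 1))⁻¹ else 0 := by
    rw [sum_const, nsmul_eq_mul]
    split_ifs with h
    · rw [card_filter_mem_path e d h, show d.1 + 1 = (d.1 - e.1.1) + (e.1.1 + 1) by omega,
        pow_add]
      push_cast
      field_simp
    · rw [filter_false_of_mem fun f _ hf => h (mem_path.1 hf).1]
      simp
  rw [sum_filter, Fintype.sum_sigma]
  simp only [card_path, ← sum_filter, hdepth]
  rw [sum_const, filter_le_eq_Ici, Fin.card_Ici, nsmul_eq_mul,
    Nat.cast_sub e.1.2.le]
  ring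

end TreeNode

open TreeNode

theorem treeExp_eq_expect {τ : ℕ} (f : (TreeNode τ → Bool) → ℝ) : treeExp τ f = 𝔼 ω, f ω := by
  rw [treeExp, Fintype.expect_eq_sum_div_card, one_div, inv_mul_eq_div]

theorem numActive_eq_sum_liveIndicator (τ : ℕ) :
    numActive τ = fun ω => ∑ v, liveIndicator (path v) ω := by
  funext ω
  simp only [numActive, liveIndicator, isLivePath_iff_forall_mem_path]

theorem treeExp_numActive (τ : ℕ) : treeExp τ (numActive τ) = τ := by
  rw [treeExp_eq_expect, numActive_eq_sum_liveIndicator, expect_sum_liveIndicator,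
    Fintype.sum_sigma]
  simp [card_path]

theorem treeExp_sq_sub_treeExp_numActive (τ : ℕ) :
    treeExp τ (fun ω => (numActive τ ω - treeExp τ (numActive τ)) ^ 2) =
      τ * (τ + 1) * (2 * τ + 1) / 12 := by
  simp only [treeExp_eq_expect, numActive_eq_sum_liveIndicator]
  rw [expect_sq_sub_expect_sum_liveIndicator]
  simp only [← sum_two_pow_depth_inter_path]
  rw [sum_sum_mul_sum_inter]
  simp only [sum_filter_mem_path_inv_two_pow_card, Fintype.sum_sigma]
  have hdepth (d : Fin τ) : ∑ _f : Fin (d.1 + 1) → Bool,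
      (2:ℝ) ^ d.1 * ((τ - d.1) / 2 ^ (d.1 + 1)) ^ 2 = ((τ:ℝ) - d.1) ^ 2 / 2 := by
    rw [sum_const, card_univ, Fintype.card_fun, Fintype.card_bool, Fintype.card_fin, nsmul_eq_mul]
    push_cast
    field_simp
    ring
  simp only [hdepth]
  rw [Fin.sum_univ_eq_sum_range (fun d => ((τ:ℝ) - d) ^ 2 / 2), ← sum_div,
    sum_range_natCast_sub_sq]
  ring

theorem tree_variance_lower_bound_general (τ : ℕ) :
    treeExp τ (numActive τ) = (τ : ℝ) ∧
    (1 / 12 : ℝ) * (τ : ℝ) * (treeExp τ (numActive τ)) ^ 2 ≤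
      treeExp τ (fun ω => (numActive τ ω - treeExp τ (numActive τ)) ^ 2) := by
  refine ⟨treeExp_numActive τ, ?_⟩
  rw [treeExp_sq_sub_treeExp_numActive, treeExp_numActive]
  have hτ : (0:ℝ) ≤ τ := τ.cast_nonneg
  nlinarith [pow_nonneg hτ 2, pow_nonneg hτ 3]

/-- **Variance lower bound for IC models.**  In the complete binary tree of depth
`τ` with each edge live independently with probability `1/2`, the number `X` of
activated non-seed nodes satisfies `E[X] = τ` and `Var[X] ≥ (1/12)·τ·(E[X])²`
(i.e. `Var[X] ≥ τ³/12`), so the linear dependence on `τ` in the variance upper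
bound is necessary. -/
theorem tree_variance_lower_bound (τ : ℕ) (hτ : 1 ≤ τ) :
    treeExp τ (numActive τ) = (τ : ℝ) ∧
    (1 / 12 : ℝ) * (τ : ℝ) * (treeExp τ (numActive τ)) ^ 2 ≤
      treeExp τ (fun ω => (numActive τ ω - treeExp τ (numActive τ)) ^ 2) :=
  tree_variance_lower_bound_general τ
end

section
/- Let G be a stochastic diffusion model on a finite node set V with |V| = n and additive utility H(S) = Σ_{v∈S} w(v) for nonnegative node weights w, and let S ⊆ V be a seed set with unrestricted influence I(S) := I^{n−1}(S) > 0. Then for every 0 < ε < 1 and every integer τ ≥ D̄(S)/ε, the τ-step influence satisfies I^τ(S) ≥ (1 − ε)·I(S). -/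
open Finset

section Stmt11
variable {V : Type*} [Fintype V] [DecidableEq V]

/-- `firstActP p S v d` : the probability `p(S,v,d)` that node `v` is first
activated at step `d` of a diffusion from seed set `S`. -/
noncomputable def firstActP (p : ActFam V → ℝ) (S : Finset V) (v : V) : ℕ → ℝ
  | 0 => if v ∈ S then 1 else 0
  | d + 1 => ∑ φ : ActFam V,
      if v ∈ reach φ S (d + 1) ∧ v ∉ reach φ S d then p φ else 0

/-- The expected length `D̄(S)` of an activation path from `S` in unrestricted
diffusion (which stabilizes after `n − 1` steps), with additive utility given by
node weights `w`. -/
noncomputable def expPathLen (p : ActFam V → ℝ) (w : V → ℝ) (S : Finset V) : ℝ :=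
  (∑ v : V, w v * ∑ d ∈ Finset.range (Fintype.card V), (d : ℝ) * firstActP p S v d) /
    infl p (fun A => ∑ u ∈ A, w u) (Fintype.card V - 1) S

/-!
For additive utility, `I^t(S) = ∑_v w(v) · Pr[v ∈ ρ^t]` and `Pr[v ∈ ρ^t] = ∑_{d ≤ t} p(S,v,d)`,
so the influence lost by stopping after `τ` steps is the weight of activations at depths
`d > τ`. By Markov's inequality this is at most `D̄(S) · I(S) / (τ + 1) ≤ ε · I(S)`.
-/

lemma reach_monotone (φ : ActFam V) (S : Finset V) : Monotone (reach φ S) :=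
  monotone_nat_of_le_succ fun _ => Finset.subset_union_left

noncomputable def actP (p : ActFam V → ℝ) (S : Finset V) (v : V) (t : ℕ) : ℝ :=
  ∑ φ : ActFam V, p φ * (if v ∈ reach φ S t then 1 else 0)

lemma infl_sum_eq_sum_mul_actP (p : ActFam V → ℝ) (w : V → ℝ) (t : ℕ) (S : Finset V) :
    infl p (fun A => ∑ u ∈ A, w u) t S = ∑ v : V, w v * actP p S v t := by
  have hsum : ∀ A : Finset V, ∑ u ∈ A, w u = ∑ v : V, if v ∈ A then w v else 0 := fun A => by
    rw [Finset.sum_ite_mem, Finset.univ_inter]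
  simp only [infl, actP, hsum, Finset.mul_sum]
  rw [Finset.sum_comm]
  refine Finset.sum_congr rfl fun v _ => Finset.sum_congr rfl fun φ _ => ?_
  split_ifs <;> ring

lemma actP_zero (G : SDM V) (S : Finset V) (v : V) :
    actP G.p S v 0 = if v ∈ S then 1 else 0 := by
  by_cases hv : v ∈ S <;> simp [actP, reach, hv, G.sum_one]

lemma firstActP_succ (p : ActFam V → ℝ) (S : Finset V) (v : V) (d : ℕ) :
    firstActP p S v (d + 1) = actP p S v (d + 1) - actP p S v d := by
  simp only [firstActP, actP, ← Finset.sum_sub_distrib]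
  refine Finset.sum_congr rfl fun φ _ => ?_
  have hsub := reach_monotone φ S (Nat.le_succ d)
  by_cases h₀ : v ∈ reach φ S d
  · simp [h₀, hsub h₀]
  · by_cases h₁ : v ∈ reach φ S (d + 1) <;> simp [h₀, h₁]

lemma actP_eq_sum_firstActP (G : SDM V) (S : Finset V) (v : V) (t : ℕ) :
    actP G.p S v t = ∑ d ∈ Finset.range (t + 1), firstActP G.p S v d := by
  induction t with
  | zero => simp [actP_zero, firstActP]
  | succ t ih => rw [Finset.sum_range_succ, ← ih, firstActP_succ]; ring

lemma firstActP_nonneg (G : SDM V) (S : Finset V) (v : V) (d : ℕ) :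
    0 ≤ firstActP G.p S v d := by
  cases d with
  | zero => unfold firstActP; positivity
  | succ d => exact Finset.sum_nonneg fun φ _ => by split <;> simp [G.nonneg φ]

lemma natCast_mul_sum_range_sub_le {f : ℕ → ℝ} (hf : ∀ d, 0 ≤ f d) (k n : ℕ) :
    (k : ℝ) * (∑ d ∈ Finset.range n, f d - ∑ d ∈ Finset.range k, f d) ≤
      ∑ d ∈ Finset.range n, (d : ℝ) * f d := by
  have hRHS : 0 ≤ ∑ d ∈ Finset.range n, (d : ℝ) * f d :=
    Finset.sum_nonneg fun d _ => mul_nonneg d.cast_nonneg (hf d)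
  rcases le_or_gt k n with hkn | hnk
  · rw [← Finset.sum_range_add_sum_Ico f hkn, add_sub_cancel_left, Finset.mul_sum]
    calc ∑ d ∈ Finset.Ico k n, (k : ℝ) * f d
        ≤ ∑ d ∈ Finset.Ico k n, (d : ℝ) * f d :=
          Finset.sum_le_sum fun d hd => mul_le_mul_of_nonneg_right
            (by exact_mod_cast (Finset.mem_Ico.mp hd).1) (hf d)
      _ ≤ ∑ d ∈ Finset.range n, (d : ℝ) * f d :=
          Finset.sum_le_sum_of_subset_of_nonneg
            (fun d hd => Finset.mem_range.mpr (Finset.mem_Ico.mp hd).2)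
            fun d _ _ => mul_nonneg d.cast_nonneg (hf d)
  · have hle : ∑ d ∈ Finset.range n, f d ≤ ∑ d ∈ Finset.range k, f d :=
      Finset.sum_le_sum_of_subset_of_nonneg (Finset.range_subset_range.mpr hnk.le)
        fun d _ _ => hf d
    nlinarith [k.cast_nonneg (α := ℝ)]

lemma sum_range_pred_succ_natCast_mul (f : ℕ → ℝ) (n : ℕ) :
    ∑ d ∈ Finset.range (n - 1 + 1), (d : ℝ) * f d = ∑ d ∈ Finset.range n, (d : ℝ) * f d := by
  cases n <;> simp

lemma succ_mul_infl_sub_le (G : SDM V) {w : V → ℝ} (hw : ∀ v, 0 ≤ w v) (S : Finset V)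
    (τ : ℕ) :
    ((τ : ℝ) + 1) * (infl G.p (fun A => ∑ u ∈ A, w u) (Fintype.card V - 1) S -
        infl G.p (fun A => ∑ u ∈ A, w u) τ S) ≤
      ∑ v : V, w v * ∑ d ∈ Finset.range (Fintype.card V), (d : ℝ) * firstActP G.p S v d := by
  simp only [infl_sum_eq_sum_mul_actP, actP_eq_sum_firstActP, ← Finset.sum_sub_distrib]
  rw [Finset.mul_sum]
  refine Finset.sum_le_sum fun v _ => ?_
  have hMarkov := natCast_mul_sum_range_sub_le (firstActP_nonneg G S v) (τ + 1)
    (Fintype.card V - 1 + 1)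
  rw [sum_range_pred_succ_natCast_mul] at hMarkov
  push_cast at hMarkov
  linarith [mul_le_mul_of_nonneg_left hMarkov (hw v)]

theorem steplimited_vs_unrestricted_general
    (G : SDM V) (w : V → ℝ) (hw : ∀ v, 0 ≤ w v) (S : Finset V)
    (hpos : 0 < infl G.p (fun A => ∑ u ∈ A, w u) (Fintype.card V - 1) S)
    (ε : ℝ) (hε0 : 0 < ε)
    (τ : ℕ) (hτ : (τ : ℝ) ≥ expPathLen G.p w S / ε) :
    (1 - ε) * infl G.p (fun A => ∑ u ∈ A, w u) (Fintype.card V - 1) S ≤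
      infl G.p (fun A => ∑ u ∈ A, w u) τ S := by
  set I := infl G.p (fun A => ∑ u ∈ A, w u) (Fintype.card V - 1) S
  set N := ∑ v : V, w v * ∑ d ∈ Finset.range (Fintype.card V), (d : ℝ) * firstActP G.p S v d
  have hN : N ≤ τ * (I * ε) := by
    rwa [ge_iff_le, expPathLen, div_div, div_le_iff₀ (mul_pos hpos hε0)] at hτ
  have hloss : ((τ : ℝ) + 1) * (I - infl G.p (fun A => ∑ u ∈ A, w u) τ S) ≤
      ((τ : ℝ) + 1) * (ε * I) := by
    linarith [succ_mul_infl_sub_le G hw S τ, mul_pos hε0 hpos]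
  linarith [le_of_mul_le_mul_left hloss (by positivity)]

/-- **Step-limited influence approximates unrestricted influence.**  For additive
utility, if `τ ≥ D̄(S)/ε` then `I^τ(S) ≥ (1−ε)·I(S)`, where `I(S) = I^{n−1}(S)` is
the unrestricted influence. -/
theorem steplimited_vs_unrestricted
    (G : SDM V) (w : V → ℝ) (hw : ∀ v, 0 ≤ w v) (S : Finset V)
    (hpos : 0 < infl G.p (fun A => ∑ u ∈ A, w u) (Fintype.card V - 1) S)
    (ε : ℝ) (hε0 : 0 < ε) (hε1 : ε < 1)
    (τ : ℕ) (hτ : (τ : ℝ) ≥ expPathLen G.p w S / ε) :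
    (1 - ε) * infl G.p (fun A => ∑ u ∈ A, w u) (Fintype.card V - 1) S ≤
      infl G.p (fun A => ∑ u ∈ A, w u) τ S :=
  steplimited_vs_unrestricted_general G w hw S hpos ε hε0 τ hτ

end Stmt11
end

section
/- Every Independent Cascade model on a directed graph (V, 𝓔) with edge probabilities (p_e)_{e∈𝓔}, equipped with a monotone nondecreasing submodular utility H with H(∅) = 0, is a strongly submodular stochastic diffusion model: it is an independent SDM, and for every T ⊆ V and every step limit τ ≥ 0, the τ-step influence function of its reduced model with respect to T is submodular. -/
open Finset

section IC
variable {V : Type*} [Fintype V] [DecidableEq V]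

/-- The activation-function family determined by a set `E` of live edges:
`φ_v(S) = 1` iff some live edge leads from a node of `S` to `v`. -/
def icActFam (E : Finset (V × V)) : ActFam V :=
  fun v S => decide (∃ u ∈ S, (u, v) ∈ E)

/-- The probability of the live-edge set `E ⊆ 𝓔` when every edge `e ∈ 𝓔` is live
independently with probability `pe e`. -/
noncomputable def icWeight (𝓔 : Finset (V × V)) (pe : V × V → ℝ) (E : Finset (V × V)) : ℝ :=
  ∏ e ∈ 𝓔, (if e ∈ E then pe e else 1 - pe e)

/-- The Independent Cascade model, as a distribution over activation-function
families: the pushforward of the product-Bernoulli live-edge distribution. -/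
noncomputable def icP (𝓔 : Finset (V × V)) (pe : V × V → ℝ) : ActFam V → ℝ :=
  fun φ => ∑ E ∈ 𝓔.powerset, if icActFam E = φ then icWeight 𝓔 pe E else 0

end IC

/-! For a fixed set `E` of live edges, reachability distributes over unions:
`ρ^τ(E, A ∪ B) = ρ^τ(E, A) ∪ ρ^τ(E, B)`. A monotone submodular `H` composed with a
union-preserving map is submodular, so every `S ↦ H(ρ^τ(E, S ∪ T))` is submodular, and the
reduced influence is a nonnegative combination of these functions (conditioning on `T` only
reweights the live-edge sets). Independence holds because `φ_v` depends only on the live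
in-edges of `v`, and the in-edge sets of distinct nodes are independent under the product
distribution. -/

section LiveEdge

variable {V : Type*} [DecidableEq V]

theorem SubmodularFn.union_sub_le_of_subset {H : Finset V → ℝ}
    (hs : SubmodularFn H) (hm : MonotoneFn H) (R : Finset V) {C' C : Finset V} (hC : C' ⊆ C) :
    H (C ∪ R) - H C ≤ H (C' ∪ R) - H C' := by
  induction R using Finset.induction_on with
  | empty => simp
  | @insert x R _ ih =>
    have step : H (insert x (C ∪ R)) - H (C ∪ R) ≤ H (insert x (C' ∪ R)) - H (C' ∪ R) := by
      by_cases hx : x ∈ C ∪ R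
      · rw [Finset.insert_eq_self.2 hx, sub_self, sub_nonneg]
        exact hm _ _ (Finset.subset_insert _ _)
      · exact hs _ _ (Finset.union_subset_union hC le_rfl) x hx
    rw [Finset.union_insert, Finset.union_insert]
    linarith

theorem SubmodularFn.comp_of_map_union {H : Finset V → ℝ}
    (hs : SubmodularFn H) (hm : MonotoneFn H) {R : Finset V → Finset V}
    (hR : ∀ A B, R (A ∪ B) = R A ∪ R B) :
    SubmodularFn (fun S => H (R S)) := by
  intro A B hAB x _
  have hR_mono : R A ⊆ R B := by
    rw [← Finset.union_eq_right.2 hAB, hR]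
    exact Finset.subset_union_left
  simp only [Finset.insert_eq, Finset.union_comm {x}, hR]
  exact hs.union_sub_le_of_subset hm _ hR_mono

def inEdges (E : Finset (V × V)) (v : V) : Finset (V × V) :=
  E.filter (·.2 = v)

theorem icActFam_inEdges (E : Finset (V × V)) (v : V) :
    icActFam (inEdges E v) v = icActFam E v := by
  funext S
  simp [icActFam, inEdges]

theorem icWeight_nonneg {𝓔 : Finset (V × V)} {pe : V × V → ℝ}
    (hpe : ∀ e ∈ 𝓔, 0 ≤ pe e ∧ pe e ≤ 1) (E : Finset (V × V)) : 0 ≤ icWeight 𝓔 pe E :=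
  Finset.prod_nonneg fun e he => by
    split_ifs
    · exact (hpe e he).1
    · linarith [(hpe e he).2]

theorem sum_icWeight (𝓔 : Finset (V × V)) (pe : V × V → ℝ) :
    ∑ E ∈ 𝓔.powerset, icWeight 𝓔 pe E = 1 := by
  have hsplit : ∀ E ∈ 𝓔.powerset,
      icWeight 𝓔 pe E = (∏ e ∈ E, pe e) * ∏ e ∈ 𝓔 \ E, (1 - pe e) := by
    intro E hE
    rw [icWeight, Finset.prod_ite, Finset.filter_mem_eq_inter,
      Finset.inter_eq_right.2 (Finset.mem_powerset.1 hE), Finset.filter_notMem_eq_sdiff]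
  rw [Finset.sum_congr rfl hsplit, ← Finset.prod_add]
  simp

end LiveEdge

section IC

variable {V : Type*} [Fintype V] [DecidableEq V]

theorem biUnion_inEdges (E : Finset (V × V)) : Finset.univ.biUnion (inEdges E) = E :=
  Finset.biUnion_filter_eq_of_maps_to fun _ _ => Finset.mem_univ _

theorem inEdges_biUnion {x : V → Finset (V × V)} (hx : ∀ v, ∀ e ∈ x v, e.2 = v) (v : V) :
    inEdges (Finset.univ.biUnion x) v = x v := by
  ext e
  simp only [inEdges, Finset.mem_filter, Finset.mem_biUnion, Finset.mem_univ, true_and]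
  constructor
  · rintro ⟨⟨u, he⟩, rfl⟩
    rwa [hx u e he]
  · exact fun he => ⟨⟨v, he⟩, hx v e he⟩

theorem icWeight_eq_prod_inEdges (𝓔 : Finset (V × V)) (pe : V × V → ℝ) (E : Finset (V × V)) :
    icWeight 𝓔 pe E = ∏ v, icWeight (inEdges 𝓔 v) pe (inEdges E v) := by
  rw [icWeight, ← Finset.prod_fiberwise 𝓔 Prod.snd]
  refine Finset.prod_congr rfl fun v _ => Finset.prod_congr rfl fun e he => ?_
  have hev : e.2 = v := (Finset.mem_filter.1 he).2
  simp [inEdges, hev]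

theorem icP_nonneg {𝓔 : Finset (V × V)} {pe : V × V → ℝ}
    (hpe : ∀ e ∈ 𝓔, 0 ≤ pe e ∧ pe e ≤ 1) (φ : ActFam V) : 0 ≤ icP 𝓔 pe φ :=
  Finset.sum_nonneg fun E _ => by
    split_ifs
    · exact icWeight_nonneg hpe E
    · exact le_rfl

theorem exists_icActFam_eq_of_icP_ne_zero {𝓔 : Finset (V × V)} {pe : V × V → ℝ}
    {φ : ActFam V} (h : icP 𝓔 pe φ ≠ 0) : ∃ E, icActFam E = φ := by
  by_contra! hφ
  exact h (Finset.sum_eq_zero fun E _ => if_neg (hφ E))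

/-- The law of the activation function `φ_v` of a single node in the IC model. -/
noncomputable def icNodeP (𝓔 : Finset (V × V)) (pe : V × V → ℝ) (v : V)
    (g : Finset V → Bool) : ℝ :=
  ∑ F ∈ (inEdges 𝓔 v).powerset, if icActFam F v = g then icWeight (inEdges 𝓔 v) pe F else 0

theorem icNodeP_nonneg {𝓔 : Finset (V × V)} {pe : V × V → ℝ}
    (hpe : ∀ e ∈ 𝓔, 0 ≤ pe e ∧ pe e ≤ 1) (v : V) (g : Finset V → Bool) :
    0 ≤ icNodeP 𝓔 pe v g :=
  Finset.sum_nonneg fun F _ => by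
    split_ifs
    · exact icWeight_nonneg (fun e he => hpe e (Finset.mem_filter.1 he).1) F
    · exact le_rfl

theorem sum_icNodeP (𝓔 : Finset (V × V)) (pe : V × V → ℝ) (v : V) :
    ∑ g, icNodeP 𝓔 pe v g = 1 := by
  simp only [icNodeP]
  rw [Finset.sum_comm]
  simp [sum_icWeight]

theorem icP_eq_prod_icNodeP (𝓔 : Finset (V × V)) (pe : V × V → ℝ) (φ : ActFam V) :
    icP 𝓔 pe φ = ∏ v, icNodeP 𝓔 pe v (φ v) := by
  simp only [icP, icNodeP]
  rw [Finset.prod_univ_sum]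
  refine Finset.sum_nbij' (fun E v => inEdges E v) (fun x => Finset.univ.biUnion x)
    ?_ ?_ (fun E _ => biUnion_inEdges E) ?_ fun E _ => ?_
  · intro E hE
    simp only [Fintype.mem_piFinset, Finset.mem_powerset] at hE ⊢
    exact fun v => Finset.filter_subset_filter _ hE
  · intro x hx
    simp only [Fintype.mem_piFinset, Finset.mem_powerset] at hx ⊢
    exact Finset.biUnion_subset.2 fun v _ => (hx v).trans (Finset.filter_subset _ _)
  · intro x hx
    simp only [Fintype.mem_piFinset, Finset.mem_powerset] at hx
    exact funext (inEdges_biUnion fun v e he => (Finset.mem_filter.1 (hx v he)).2)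
  · simp only [Fintype.prod_ite_zero, icActFam_inEdges, ← icWeight_eq_prod_inEdges, ← funext_iff]

theorem icP_indep {𝓔 : Finset (V × V)} {pe : V × V → ℝ}
    (hpe : ∀ e ∈ 𝓔, 0 ≤ pe e ∧ pe e ≤ 1) : IndepP (icP 𝓔 pe) :=
  ⟨icNodeP 𝓔 pe, icNodeP_nonneg hpe, sum_icNodeP 𝓔 pe, icP_eq_prod_icNodeP 𝓔 pe⟩

theorem dstep_icActFam_union (E : Finset (V × V)) (A B : Finset V) :
    dstep (icActFam E) (A ∪ B) = dstep (icActFam E) A ∪ dstep (icActFam E) B := by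
  ext v
  simp only [dstep, icActFam, Finset.mem_union, Finset.mem_filter, Finset.mem_univ, true_and,
    Finset.mem_erase, decide_eq_true_eq]
  grind

theorem reach_icActFam_union (E : Finset (V × V)) (A B : Finset V) (τ : ℕ) :
    reach (icActFam E) (A ∪ B) τ = reach (icActFam E) A τ ∪ reach (icActFam E) B τ := by
  induction τ with
  | zero => rfl
  | succ τ ih => simp only [reach, ih, dstep_icActFam_union]

theorem SubmodularFn.comp_reach_icActFam {H : Finset V → ℝ} (hs : SubmodularFn H)
    (hm : MonotoneFn H) (E : Finset (V × V)) (T : Finset V) (τ : ℕ) :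
    SubmodularFn (fun S => H (reach (icActFam E) (S ∪ T) τ)) :=
  hs.comp_of_map_union hm fun A B => by
    rw [Finset.union_union_distrib_right, reach_icActFam_union]

theorem submodularOn_reducedInfl {p : ActFam V → ℝ} (hp : ∀ φ, 0 ≤ p φ) {H : Finset V → ℝ}
    {T : Finset V} {τ : ℕ} (hsub : ∀ φ, p φ ≠ 0 → SubmodularFn (fun S => H (reach φ (S ∪ T) τ)))
    (U : Finset V) : SubmodularOn U (reducedInfl p H T τ) := by
  intro A B hAB _ x _ hxB
  simp only [reducedInfl, div_sub_div_same, ← Finset.sum_sub_distrib, ← mul_sub,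
    sub_sub_sub_cancel_right]
  set w := Set.indicator {ψ : ActFam V | ∀ v ∉ T, ψ v (T.erase v) = false} p
  have hw : ∀ φ, 0 ≤ w φ := fun φ => Set.indicator_apply_nonneg fun _ => hp φ
  refine div_le_div_of_nonneg_right (Finset.sum_le_sum fun φ _ => ?_)
    (Finset.sum_nonneg fun φ _ => hw φ)
  by_cases hφ : p φ = 0
  · simp [w, Set.indicator_apply, hφ]
  · exact mul_le_mul_of_nonneg_left (hsub φ hφ A B hAB x hxB) (hw φ)

theorem ic_strongly_submodular_general
    (𝓔 : Finset (V × V)) (pe : V × V → ℝ)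
    (hpe : ∀ e ∈ 𝓔, 0 ≤ pe e ∧ pe e ≤ 1)
    (H : Finset V → ℝ)
    (hHmono : MonotoneFn H) (hHsub : SubmodularFn H) :
    StronglySubmodular (icP 𝓔 pe) H := by
  refine ⟨icP_indep hpe, hHsub, fun T τ => submodularOn_reducedInfl (icP_nonneg hpe) ?_ Tᶜ⟩
  intro φ hφ
  obtain ⟨E, rfl⟩ := exists_icActFam_eq_of_icP_ne_zero hφ
  exact hHsub.comp_reach_icActFam hHmono E T τ

/-- **IC models are strongly submodular.**  Every Independent Cascade model with
monotone submodular utility `H` (`H(∅)=0`) is an independent SDM whose reduced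
influence functions (for every `T ⊆ V` and every step limit) are submodular. -/
theorem ic_strongly_submodular
    (𝓔 : Finset (V × V)) (pe : V × V → ℝ)
    (hpe : ∀ e ∈ 𝓔, 0 ≤ pe e ∧ pe e ≤ 1)
    (H : Finset V → ℝ) (hH0 : H ∅ = 0) (hHnn : ∀ S, 0 ≤ H S)
    (hHmono : MonotoneFn H) (hHsub : SubmodularFn H) :
    StronglySubmodular (icP 𝓔 pe) H :=
  ic_strongly_submodular_general 𝓔 pe hpe H hHmono hHsub

end IC
end
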